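/- arXiv:1408.5783 — 7 statements merged into one kernel-verified Lean document; each statement's English description precedes it below -/
import Mathlib

section
/- Let P be a poset, let H ⊆ 2^[n] be a fixed family, and let α(H,P) denote the maximum size of a subfamily of H containing no copy of P as a weak subposet. If A ⊆ 2^[n] is a P-free family, then Σ_{A∈A} N_{|A|} / C(n,|A|) ≤ α(H,P), where N_i is the number of sets in H of cardinality i. -/
/-- A family `𝒜 ⊆ 2^[n]` contains the poset `P` as a weak subposet. -/
def containsWeak {n : ℕ} (𝒜 : Finset (Finset (Fin n))) (P : Type*) [PartialOrder P] : Prop :=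
  ∃ φ : P → Finset (Fin n), Function.Injective φ ∧ (∀ x, φ x ∈ 𝒜) ∧
    ∀ x y : P, x ≤ y → φ x ⊆ φ y

/-!
Average over the permutations `π` of `[n]`. For each `π`, the sets `A ∈ 𝒜` with `π A ∈ H` are
carried by `π` onto a `P`-free subfamily of `H`, so there are at most `α` of them. Counted the
other way, a fixed `A` has `π A ∈ H` for exactly `N_{|A|} · n! / C(n,|A|)` permutations, because
each set of size `|A|` is the image of `A` under the same number `n! / C(n,|A|)` of permutations.
Summing over `π` gives `n! · Σ_A N_{|A|} / C(n,|A|) ≤ n! · α`.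
-/

open Finset Equiv
open scoped Nat Pointwise

theorem Equiv.Perm.exists_smul_finset_eq {ι : Type*} [DecidableEq ι] {S T : Finset ι}
    (h : #S = #T) : ∃ σ : Perm ι, σ • S = T := by
  have := Set.powersetCard.isPretransitive (α := ι) (n := #T)
  obtain ⟨σ, hσ⟩ := MulAction.exists_smul_eq (Perm ι)
    (Set.powersetCard.ofCard h) (Set.powersetCard.ofCard rfl)
  exact ⟨σ, congrArg Subtype.val hσ⟩

section PermCounting

variable {ι : Type*} [Fintype ι] [DecidableEq ι]

theorem card_perm_smul_eq_eq_of_card_eq (A : Finset ι) {S T : Finset ι} (h : #S = #T) :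
    #{π : Perm ι | π • A = S} = #{π : Perm ι | π • A = T} := by
  obtain ⟨σ, hσ⟩ := Perm.exists_smul_finset_eq h
  refine card_nbij' (σ * ·) (σ⁻¹ * ·) ?_ ?_ (fun _ _ => by simp) (fun _ _ => by simp)
  · intro π hπ
    simp_all [mul_smul]
  · intro π hπ
    simp_all [mul_smul, inv_smul_eq_iff]

theorem card_perm_smul_eq_mul_choose (A : Finset ι) {S : Finset ι} (h : #S = #A) :
    #{π : Perm ι | π • A = S} * (Fintype.card ι).choose #A = (Fintype.card ι)! := by
  have hfib := card_eq_sum_card_fiberwise (s := (univ : Finset (Perm ι)))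
    (t := powersetCard #A univ) (f := (· • A)) (fun π _ => by simp)
  rw [sum_const_nat fun T hT => card_perm_smul_eq_eq_of_card_eq A
    ((mem_powersetCard.1 hT).2.trans h.symm), card_powersetCard, Finset.card_univ,
    Fintype.card_perm, Finset.card_univ] at hfib
  rw [mul_comm]
  exact hfib.symm

theorem card_perm_smul_mem_mul_choose (H : Finset (Finset ι)) (A : Finset ι) :
    #{π : Perm ι | π • A ∈ H} * (Fintype.card ι).choose #A
      = #{S ∈ H | #S = #A} * (Fintype.card ι)! := by
  have hfib := card_eq_sum_card_fiberwise (s := {π : Perm ι | π • A ∈ H})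
    (t := {S ∈ H | #S = #A}) (f := (· • A)) (fun π hπ => by simp_all)
  rw [hfib, sum_mul, ← smul_eq_mul, ← sum_const]
  refine sum_congr rfl fun S hS => ?_
  rw [mem_filter] at hS
  rw [filter_filter, ← card_perm_smul_eq_mul_choose A hS.2]
  congr 2
  ext π
  simp only [mem_filter, mem_univ, true_and, and_iff_right_iff_imp]
  exact fun h => h ▸ hS.1

end PermCounting

section ContainsWeak

variable {n : ℕ} {P : Type*} [PartialOrder P] {𝒜 ℬ : Finset (Finset (Fin n))}

theorem containsWeak.mono (h : 𝒜 ⊆ ℬ) : containsWeak 𝒜 P → containsWeak ℬ P :=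
  fun ⟨f, hinj, hmem, hmono⟩ => ⟨f, hinj, fun x => h (hmem x), hmono⟩

theorem containsWeak.smul (π : Perm (Fin n)) : containsWeak 𝒜 P → containsWeak (π • 𝒜) P :=
  fun ⟨f, hinj, hmem, hmono⟩ => ⟨(π • f ·), (MulAction.injective π).comp hinj,
    fun x => smul_mem_smul_finset (hmem x),
    fun x y hxy => smul_finset_subset_smul_finset (hmono x y hxy)⟩

theorem card_filter_perm_smul_mem_le {H : Finset (Finset (Fin n))} {α : ℕ}
    (hα : ∀ 𝒮 ⊆ H, ¬ containsWeak 𝒮 P → #𝒮 ≤ α) (h𝒜 : ¬ containsWeak 𝒜 P)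
    (π : Perm (Fin n)) : #{A ∈ 𝒜 | π • A ∈ H} ≤ α := by
  have hsub : π • {A ∈ 𝒜 | π • A ∈ H} ⊆ H := fun S hS => by
    obtain ⟨A, hA, rfl⟩ := mem_smul_finset.1 hS
    exact (mem_filter.1 hA).2
  have hfree : ¬ containsWeak (π • {A ∈ 𝒜 | π • A ∈ H}) P := fun h =>
    h𝒜 <| (inv_smul_smul π {A ∈ 𝒜 | π • A ∈ H} ▸ h.smul π⁻¹).mono (filter_subset _ _)
  simpa only [card_smul_finset] using hα _ hsub hfree

end ContainsWeak

theorem sum_card_perm_smul_mem_le {n : ℕ} {P : Type*} [PartialOrder P]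
    {H 𝒜 : Finset (Finset (Fin n))} {α : ℕ}
    (hα : ∀ 𝒮 ⊆ H, ¬ containsWeak 𝒮 P → #𝒮 ≤ α) (h𝒜 : ¬ containsWeak 𝒜 P) :
    ∑ A ∈ 𝒜, #{π : Perm (Fin n) | π • A ∈ H} ≤ n ! * α := by
  calc ∑ A ∈ 𝒜, #{π : Perm (Fin n) | π • A ∈ H}
      = ∑ π : Perm (Fin n), #{A ∈ 𝒜 | π • A ∈ H} :=
        sum_card_bipartiteAbove_eq_sum_card_bipartiteBelow fun A (π : Perm (Fin n)) => π • A ∈ H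
    _ ≤ ∑ _π : Perm (Fin n), α := sum_le_sum fun π _ => card_filter_perm_smul_mem_le hα h𝒜 π
    _ = n ! * α := by simp [Fintype.card_perm]

theorem lubell_type_bound_general (n : ℕ) (P : Type*) [PartialOrder P]
    (H : Finset (Finset (Fin n))) (α : ℕ)
    (hα : ∀ 𝒮 ⊆ H, ¬ containsWeak 𝒮 P → 𝒮.card ≤ α)
    (𝒜 : Finset (Finset (Fin n))) (h𝒜 : ¬ containsWeak 𝒜 P) :
    ∑ A ∈ 𝒜, ((H.filter (fun S => S.card = A.card)).card : ℝ) / (n.choose A.card) ≤ α := by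
  have hterm (A : Finset (Fin n)) :
      (#{S ∈ H | #S = #A} : ℝ) / n.choose #A = #{π : Perm (Fin n) | π • A ∈ H} / n ! := by
    have hchoose : (n.choose #A : ℝ) ≠ 0 := by
      exact_mod_cast (Nat.choose_pos (card_le_univ A |>.trans_eq (Fintype.card_fin n))).ne'
    rw [div_eq_div_iff hchoose (by positivity)]
    have hcount := card_perm_smul_mem_mul_choose H A
    rw [Fintype.card_fin] at hcount
    exact_mod_cast hcount.symm
  rw [sum_congr rfl fun A _ => hterm A, ← sum_div, div_le_iff₀ (by positivity), mul_comm]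
  exact_mod_cast sum_card_perm_smul_mem_le hα h𝒜

/-- If `𝒜 ⊆ 2^[n]` is `P`-free and `α` bounds the size of every `P`-free subfamily of a
fixed family `H` (in particular if `α = α(H,P)` is the maximum size of such a subfamily),
then `Σ_{A∈𝒜} N_{|A|}/C(n,|A|) ≤ α`, where `N_i` is the number of sets in `H` of size `i`. -/
theorem lubell_type_bound (n : ℕ) (P : Type*) [PartialOrder P] [Fintype P]
    (H : Finset (Finset (Fin n))) (α : ℕ)
    (hα : ∀ 𝒮 ⊆ H, ¬ containsWeak 𝒮 P → 𝒮.card ≤ α)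
    (𝒜 : Finset (Finset (Fin n))) (h𝒜 : ¬ containsWeak 𝒜 P) :
    ∑ A ∈ 𝒜, ((H.filter (fun S => S.card = A.card)).card : ℝ) / (n.choose A.card) ≤ α :=
  lubell_type_bound_general n P H α hα 𝒜 h𝒜
end

section
/- Fix k ≥ 2 and n ≥ 2k, and let k ≤ m ≤ n−k. The number of sets of cardinality m in the k-interval chain C_k^0 whose indicator vector has at least j zeros before its last 1 is Σ_{h=j}^{k−1} C(k−1, h). -/
/-!
Let `A ∈ C_k^0` have `m` elements, `z` zeros before its last 1, and last element `l`
(0-indexed). The indicator vector of `A` on `{0, …, l}` has `m` ones and `z` zeros, so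
`l = m + z - 1`, and `A = {0, …, m + z - 1} \ Z` for the set `Z` of its `z` zeros. Membership in
the chain forces every position below `l + 1 - k` to be a 1, so `Z` lies in the `k - 1`
positions `m + z - k, …, m + z - 2`; conversely, when `k ≤ m ≤ n - k`, every `z`-subset of these
positions gives a set of the chain. So exactly `C(k - 1, z)` sets of size `m` have `z` zeros, the
number of zeros never exceeds `k - 1`, and summing over `z ≥ j` gives the count.
-/

/-- The initial segment `{1,…,i}` of `[n]`, as a subset of `Fin n`. -/
def initSeg (n i : ℕ) : Finset (Fin n) := Finset.univ.filter (fun x => (x : ℕ) < i)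

/-- The `k`-interval chain `C_k^0 = ⋃_{i=0}^{n-k} [[i],[i+k]]`. -/
def intervalChain (n k : ℕ) : Finset (Finset (Fin n)) :=
  (Finset.range (n - k + 1)).biUnion (fun i => Finset.Icc (initSeg n i) (initSeg n (i + k)))

/-- The number of zeros before the last 1 in the indicator vector of `A`: the number of
elements not in `A` that are smaller than some element of `A`. -/
def zerosBeforeLastOne {n : ℕ} (A : Finset (Fin n)) : ℕ :=
  (Finset.univ.filter (fun x => x ∉ A ∧ ∃ y ∈ A, x < y)).card

lemma sdiff_injOn_Iic {α : Type*} [GeneralizedBooleanAlgebra α] (a : α) :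
    Set.InjOn (a \ ·) (Set.Iic a) := fun b hb c hc h ↦ by
  rw [← sdiff_sdiff_eq_self hb, ← sdiff_sdiff_eq_self hc]
  exact congrArg (a \ ·) h

open Finset

section
variable {n : ℕ}

lemma mem_initSeg {i : ℕ} {x : Fin n} : x ∈ initSeg n i ↔ (x : ℕ) < i := by
  simp [initSeg]

lemma initSeg_mono {i j : ℕ} (h : i ≤ j) : initSeg n i ⊆ initSeg n j :=
  fun _ hx ↦ mem_initSeg.2 ((mem_initSeg.1 hx).trans_le h)

lemma card_initSeg (i : ℕ) : #(initSeg n i) = min n i :=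
  Fin.card_filter_val_lt

lemma card_initSeg_sdiff_initSeg (a b : ℕ) :
    #(initSeg n b \ initSeg n a) = min n b - min n a := by
  have hinter : initSeg n a ∩ initSeg n b = initSeg n (min a b) := by
    ext x
    simp only [mem_inter, mem_initSeg]
    omega
  rw [card_sdiff, hinter, card_initSeg, card_initSeg]
  omega

lemma mem_intervalChain {k : ℕ} {A : Finset (Fin n)} :
    A ∈ intervalChain n k ↔ ∃ i ≤ n - k, initSeg n i ⊆ A ∧ A ⊆ initSeg n (i + k) := by
  simp [intervalChain]

lemma zerosBeforeLastOne_eq_card_sdiff {A : Finset (Fin n)} {l : Fin n} (hl : l ∈ A)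
    (hA : A ⊆ initSeg n (l + 1)) :
    zerosBeforeLastOne A = #(initSeg n (l + 1) \ A) := by
  rw [zerosBeforeLastOne]
  congr 1
  ext x
  simp only [mem_filter, mem_univ, true_and, mem_sdiff, mem_initSeg]
  constructor
  · rintro ⟨hxA, y, hyA, hxy⟩
    have : (y : ℕ) < l + 1 := mem_initSeg.1 (hA hyA)
    exact ⟨by omega, hxA⟩
  · rintro ⟨hxl, hxA⟩
    have hne : x ≠ l := fun h ↦ hxA (h ▸ hl)
    exact ⟨hxA, l, hl, lt_of_le_of_ne (Nat.lt_succ_iff.1 hxl) hne⟩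

lemma zerosBeforeLastOne_le {k : ℕ} {A : Finset (Fin n)} (hA : A ∈ intervalChain n k) :
    zerosBeforeLastOne A ≤ k - 1 := by
  obtain ⟨i, -, hiA, hAi⟩ := mem_intervalChain.1 hA
  have hzeros : univ.filter (fun x ↦ x ∉ A ∧ ∃ y ∈ A, x < y)
      ⊆ initSeg n (i + k - 1) \ initSeg n i := by
    intro x hx
    simp only [mem_filter, mem_univ, true_and] at hx
    obtain ⟨hxA, y, hyA, hxy⟩ := hx
    have hy : (y : ℕ) < i + k := mem_initSeg.1 (hAi hyA)
    have hx : ¬(x : ℕ) < i := fun h ↦ hxA (hiA (mem_initSeg.2 h))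
    simp only [mem_sdiff, mem_initSeg]
    omega
  calc zerosBeforeLastOne A ≤ #(initSeg n (i + k - 1) \ initSeg n i) := card_le_card hzeros
    _ ≤ k - 1 := by rw [card_initSeg_sdiff_initSeg]; omega

lemma initSeg_sdiff_subset_of_mem_intervalChain {k : ℕ} {A : Finset (Fin n)} {l : Fin n}
    (hA : A ∈ intervalChain n k) (hl : l ∈ A) :
    initSeg n (l + 1) \ A ⊆ initSeg n l \ initSeg n (l + 1 - k) := by
  obtain ⟨i, -, hiA, hAi⟩ := mem_intervalChain.1 hA
  have hli : (l : ℕ) < i + k := mem_initSeg.1 (hAi hl)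
  intro x hx
  simp only [mem_sdiff, mem_initSeg] at hx ⊢
  have hxi : ¬(x : ℕ) < i := fun h ↦ hx.2 (hiA (mem_initSeg.2 h))
  have hxl : x ≠ l := fun h ↦ hx.2 (h ▸ hl)
  have : (x : ℕ) ≠ l := Fin.val_ne_of_ne hxl
  omega

lemma initSeg_sdiff_mem_intervalChain {k p : ℕ} {Z : Finset (Fin n)} (hpn : p ≤ n)
    (hZ : Z ⊆ initSeg n (p - 1) \ initSeg n (p - k)) :
    initSeg n p \ Z ∈ intervalChain n k := by
  refine mem_intervalChain.2 ⟨p - k, by omega, fun x hx ↦ ?_,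
    sdiff_subset.trans (initSeg_mono (by omega))⟩
  have hxZ : x ∉ Z := fun h ↦ (mem_sdiff.1 (hZ h)).2 hx
  exact mem_sdiff.2 ⟨initSeg_mono (by omega) hx, hxZ⟩

lemma zerosBeforeLastOne_initSeg_sdiff {p : ℕ} {Z : Finset (Fin n)} (hp : 0 < p) (hpn : p ≤ n)
    (hZ : Z ⊆ initSeg n (p - 1)) :
    zerosBeforeLastOne (initSeg n p \ Z) = #Z := by
  obtain ⟨l, rfl⟩ : ∃ l : Fin n, (l : ℕ) + 1 = p := ⟨⟨p - 1, by omega⟩, Nat.sub_add_cancel hp⟩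
  rw [Nat.add_sub_cancel] at hZ
  have hlast : l ∈ initSeg n (l + 1) \ Z :=
    mem_sdiff.2 ⟨mem_initSeg.2 (Nat.lt_succ_self _), fun h ↦ lt_irrefl _ (mem_initSeg.1 (hZ h))⟩
  rw [zerosBeforeLastOne_eq_card_sdiff hlast sdiff_subset,
    Finset.sdiff_sdiff_eq_self (hZ.trans (initSeg_mono (Nat.le_succ _)))]

lemma intervalChain_fiber_eq_image {k m z : ℕ} (hm : 0 < m) (hmn : m + z ≤ n) :
    (intervalChain n k).filter (fun A ↦ #A = m ∧ zerosBeforeLastOne A = z)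
      = (powersetCard z (initSeg n (m + z - 1) \ initSeg n (m + z - k))).image
          (initSeg n (m + z) \ ·) := by
  ext A
  simp only [mem_filter, mem_image, mem_powersetCard]
  constructor
  · rintro ⟨hA, rfl, rfl⟩
    have hne : A.Nonempty := card_pos.1 hm
    obtain ⟨l, hl, hAl⟩ : ∃ l ∈ A, A ⊆ initSeg n (l + 1) := ⟨A.max' hne, A.max'_mem hne,
      fun y hy ↦ mem_initSeg.2 (Nat.lt_succ_of_le (A.le_max' y hy))⟩
    have hzeros := zerosBeforeLastOne_eq_card_sdiff hl hAl
    have hlast : (l : ℕ) + 1 = #A + zerosBeforeLastOne A := by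
      rw [hzeros, add_comm #A, card_sdiff_add_card_eq_card hAl, card_initSeg]
      omega
    rw [← hlast, Nat.add_sub_cancel]
    exact ⟨_, ⟨initSeg_sdiff_subset_of_mem_intervalChain hA hl, hzeros.symm⟩,
      Finset.sdiff_sdiff_eq_self hAl⟩
  · rintro ⟨Z, ⟨hZ, rfl⟩, rfl⟩
    have hZp : Z ⊆ initSeg n (m + #Z) := hZ.trans (sdiff_subset.trans (initSeg_mono (by omega)))
    refine ⟨initSeg_sdiff_mem_intervalChain hmn hZ, ?_,
      zerosBeforeLastOne_initSeg_sdiff (by omega) hmn (hZ.trans sdiff_subset)⟩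
    rw [card_sdiff_of_subset hZp, card_initSeg]
    omega

lemma card_intervalChain_fiber {k m z : ℕ} (hkm : k ≤ m) (hm : 0 < m) (hmn : m + z ≤ n) :
    #((intervalChain n k).filter (fun A ↦ #A = m ∧ zerosBeforeLastOne A = z))
      = (k - 1).choose z := by
  have hinj : Set.InjOn (initSeg n (m + z) \ ·)
      (powersetCard z (initSeg n (m + z - 1) \ initSeg n (m + z - k))) :=
    (sdiff_injOn_Iic _).mono fun _ hZ ↦
      (mem_powersetCard.1 hZ).1.trans (sdiff_subset.trans (initSeg_mono (by omega)))
  rw [intervalChain_fiber_eq_image hm hmn, card_image_of_injOn hinj, card_powersetCard,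
    card_initSeg_sdiff_initSeg]
  congr 1
  omega

end

theorem intervalChain_level_card_many_zeros_general (n k m j : ℕ) (hk : 2 ≤ k)
    (hm₁ : k ≤ m) (hm₂ : m ≤ n - k) :
    ((intervalChain n k).filter (fun A => A.card = m ∧ j ≤ zerosBeforeLastOne A)).card
      = ∑ h ∈ Finset.Icc j (k - 1), Nat.choose (k - 1) h := by
  rw [card_eq_sum_card_fiberwise (f := zerosBeforeLastOne) (t := Icc j (k - 1))]
  · refine sum_congr rfl fun z hz ↦ ?_
    have hz := mem_Icc.1 hz
    rw [filter_filter, ← card_intervalChain_fiber (n := n) hm₁ (by omega) (by omega)]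
    congr 1
    refine filter_congr fun A _ ↦ ?_
    omega
  · intro A hA
    obtain ⟨hA, -, hj⟩ := mem_filter.1 hA
    exact mem_Icc.2 ⟨hj, zerosBeforeLastOne_le hA⟩

/-- For `k ≤ m ≤ n-k`, the number of sets of cardinality `m` in the `k`-interval chain
having at least `j` zeros before the last 1 is `Σ_{h=j}^{k-1} C(k-1,h)`. -/
theorem intervalChain_level_card_many_zeros (n k m j : ℕ) (hk : 2 ≤ k) (hn : 2 * k ≤ n)
    (hm₁ : k ≤ m) (hm₂ : m ≤ n - k) :
    ((intervalChain n k).filter (fun A => A.card = m ∧ j ≤ zerosBeforeLastOne A)).card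
      = ∑ h ∈ Finset.Icc j (k - 1), Nat.choose (k - 1) h :=
  intervalChain_level_card_many_zeros_general n k m j hk hm₁ hm₂
end

section
/- For any fixed finite poset P and any fixed k ≥ 2, for all sufficiently large n, every family A ⊆ 2^[n] not containing P as a weak subposet satisfies |A| ≤ (1/2^{k−1})(|P| + (3k−5)·2^{k−2}(h(P)−1) − 1) · C(n, ⌊n/2⌋). -/
/-- `h` is the height of the poset `P`: the maximum size of a chain in `P`. -/
def isHeight (P : Type*) [PartialOrder P] (h : ℕ) : Prop :=
  (∃ s : Finset P, IsChain (· ≤ ·) (s : Set P) ∧ s.card = h) ∧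
  ∀ s : Finset P, IsChain (· ≤ ·) (s : Set P) → s.card ≤ h

/-!
Average over the `n!` maximal chains `∅ ⊂ σ⁻¹{0} ⊂ σ⁻¹{0, 1} ⊂ ⋯` of `2^[n]`.

In the `k`-interval chain of a maximal chain `(Eᵢ)`, i.e. among the sets `G` with
`Eᵢ ⊆ G ⊆ E_{i+k}`, every family of `|P| + (3k-5)2^(k-2)(h(P)-1)` sets contains `P`: send the
minimal elements of `P` to the sets with the smallest top indices, the largest one being `p`;
at most `(3k-5)2^(k-2)` of the remaining sets neither contain `E_p` nor lie below it, and after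
discarding them the rest of `P`, of smaller height, is embedded into the sets containing `E_p`.

A set of size `f` lies in the `k`-interval chains of at least `2^(k-1) f! (n-f)!` maximal chains
when `k - 1 ≤ f ≤ n - k + 1`, and of at least `f! (n-f)!` otherwise, where `C(n, f) ≤ n^(k-1)`
is negligible against `C(n, ⌊n/2⌋)`. Double counting pairs (maximal chain, member) gives the bound.
-/

open Finset

def InIntervalChain (k : ℕ) (G : Finset ℕ) : Prop :=
  ∃ i, range i ⊆ G ∧ G ⊆ range (i + k)

theorem inIntervalChain_range (k f : ℕ) : InIntervalChain k (range f) :=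
  ⟨f, subset_rfl, range_subset_range.mpr (Nat.le_add_right f k)⟩

def rangeBound (G : Finset ℕ) : ℕ := G.sup (· + 1)

theorem subset_range_iff_rangeBound_le {G : Finset ℕ} {j : ℕ} :
    G ⊆ range j ↔ rangeBound G ≤ j := by
  simp [rangeBound, subset_iff]

def firstGap (G : Finset ℕ) : ℕ := Nat.find (Infinite.exists_notMem_finset G)

theorem range_subset_iff_le_firstGap {G : Finset ℕ} {j : ℕ} :
    range j ⊆ G ↔ j ≤ firstGap G := by
  simp [firstGap, Nat.le_find_iff, subset_iff]

theorem range_firstGap_subset (G : Finset ℕ) : range (firstGap G) ⊆ G :=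
  range_subset_iff_le_firstGap.mpr le_rfl

theorem firstGap_notMem (G : Finset ℕ) : firstGap G ∉ G :=
  Nat.find_spec (Infinite.exists_notMem_finset G)

theorem firstGap_eq {G : Finset ℕ} {j : ℕ} (hj : range j ⊆ G) (hjG : j ∉ G) : firstGap G = j :=
  le_antisymm (Nat.find_min' _ hjG) (range_subset_iff_le_firstGap.mp hj)

theorem range_firstGap_union_filter (G : Finset ℕ) :
    range (firstGap G) ∪ {x ∈ G | firstGap G < x} = G := by
  ext x
  simp only [mem_union, mem_range, mem_filter]
  constructor
  · rintro (hx | hx)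
    · exact range_firstGap_subset G (mem_range.mpr hx)
    · exact hx.1
  · intro hx
    rcases lt_trichotomy x (firstGap G) with h | rfl | h
    · exact Or.inl h
    · exact absurd hx (firstGap_notMem G)
    · exact Or.inr ⟨hx, h⟩

theorem InIntervalChain.subset_range_firstGap_add {k : ℕ} {G : Finset ℕ}
    (hG : InIntervalChain k G) : G ⊆ range (firstGap G + k) := by
  obtain ⟨i, hiG, hGi⟩ := hG
  exact hGi.trans (range_subset_range.mpr (by have := range_subset_iff_le_firstGap.mp hiG; omega))

instance (k : ℕ) : DecidablePred (InIntervalChain k) := fun G =>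
  decidable_of_iff _ ⟨fun h => ⟨firstGap G, range_firstGap_subset G, h⟩,
    InIntervalChain.subset_range_firstGap_add⟩

theorem card_le_of_not_range_subset_of_not_subset_range {k p q : ℕ} (hpq : p ≤ q + 1)
    {S : Finset (Finset ℕ)} (hS : ∀ G ∈ S, InIntervalChain k G ∧ ¬ range p ⊆ G ∧ ¬ G ⊆ range q) :
    #S ≤ (p + k - 1 - q) * (2 ^ (k - 1) - 1) := by
  -- `G = range b ∪ W`, where `b` is the first gap of `G` and `∅ ≠ W ⊆ Ioo b (b + k)`.
  have hcover : S ⊆ (Ico (q + 1 - k) p).biUnion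
      fun b => ((Ioo b (b + k)).powerset.erase ∅).image (range b ∪ ·) := by
    intro G hG
    obtain ⟨hGk, hpG, hGq⟩ := hS G hG
    obtain ⟨a, haG, hqa⟩ := not_subset.mp hGq
    rw [mem_range, not_lt] at hqa
    have hak : a < firstGap G + k := mem_range.mp (hGk.subset_range_firstGap_add haG)
    have hbp : firstGap G < p := by
      by_contra! hpb
      exact hpG ((range_subset_range.mpr hpb).trans (range_firstGap_subset G))
    have hba : firstGap G < a :=
      lt_of_le_of_ne (by omega) (ne_of_mem_of_not_mem haG (firstGap_notMem G)).symm
    simp only [mem_biUnion, mem_Ico, mem_image, mem_erase, mem_powerset]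
    refine ⟨firstGap G, ⟨by omega, hbp⟩, _, ⟨ne_empty_of_mem (mem_filter.mpr ⟨haG, hba⟩),
      fun x hx => ?_⟩, range_firstGap_union_filter G⟩
    rw [mem_filter] at hx
    exact mem_Ioo.mpr ⟨hx.2, mem_range.mp (hGk.subset_range_firstGap_add hx.1)⟩
  calc #S ≤ _ := card_le_card hcover
    _ ≤ ∑ b ∈ Ico (q + 1 - k) p, #(((Ioo b (b + k)).powerset.erase ∅).image (range b ∪ ·)) :=
        card_biUnion_le
    _ ≤ ∑ b ∈ Ico (q + 1 - k) p, (2 ^ (k - 1) - 1) := by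
        gcongr with b
        refine card_image_le.trans_eq ?_
        rw [card_erase_of_mem (empty_mem_powerset _), card_powerset, Nat.card_Ioo,
          Nat.add_sub_cancel_left]
    _ ≤ (p + k - 1 - q) * (2 ^ (k - 1) - 1) := by
        rw [sum_const, Nat.card_Ico, smul_eq_mul]
        exact Nat.mul_le_mul_right _ (by omega)

theorem Finset.exists_subset_card_eq_forall_le {α β : Type*} [DecidableEq α] [LinearOrder β]
    (f : α → β) (S : Finset α) {t : ℕ} (ht : t ≤ #S) :
    ∃ B ⊆ S, #B = t ∧ ∀ x ∈ B, ∀ y ∈ S \ B, f x ≤ f y := by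
  induction t with
  | zero => exact ⟨∅, empty_subset _, card_empty, by simp⟩
  | succ t ih =>
    obtain ⟨B, hBS, hBt, hB⟩ := ih (by omega)
    have hne : (S \ B).Nonempty := by
      rw [← card_pos, card_sdiff_of_subset hBS]; omega
    obtain ⟨z, hz, hzmin⟩ := (S \ B).exists_min_image f hne
    obtain ⟨hzS, hzB⟩ := mem_sdiff.mp hz
    refine ⟨insert z B, insert_subset hzS hBS, by rw [card_insert_of_notMem hzB, hBt], ?_⟩
    intro x hx y hy
    have hy' : y ∈ S \ B := by
      simp only [mem_sdiff, mem_insert, not_or] at hy ⊢; exact ⟨hy.1, hy.2.2⟩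
    rcases mem_insert.mp hx with rfl | hx
    · exact hzmin y hy'
    · exact hB x hx y hy'

def splitKey (G : Finset ℕ) : ℕ :=
  2 * rangeBound G + if G = range (rangeBound G) then 1 else 0

theorem rangeBound_le_of_splitKey_le {G G' : Finset ℕ} (h : splitKey G ≤ splitKey G') :
    rangeBound G ≤ rangeBound G' := by
  unfold splitKey at h
  split_ifs at h <;> omega

theorem eq_of_splitKey_le {G G' : Finset ℕ} (hG' : G' = range (rangeBound G'))
    (h : splitKey G' ≤ splitKey G) (hGG' : rangeBound G ≤ rangeBound G') : G = G' := by
  unfold splitKey at h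
  rw [if_pos hG'] at h
  split_ifs at h with hG
  · rw [hG, hG', show rangeBound G = rangeBound G' by omega]
  · omega

theorem mul_two_pow_sub_one_le {k : ℕ} (hk : 2 ≤ k) :
    k * (2 ^ (k - 1) - 1) ≤ (3 * k - 5) * 2 ^ (k - 2) + 1 := by
  obtain ⟨j, rfl⟩ : ∃ j, k = j + 2 := ⟨k - 2, by omega⟩
  simp only [show j + 2 - 1 = j + 1 by omega, show j + 2 - 2 = j by omega,
    show 3 * (j + 2) - 5 = 3 * j + 1 by omega, pow_succ]
  have h1 : 1 ≤ 2 ^ j := Nat.one_le_two_pow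
  rcases Nat.lt_or_ge j 3 with hj | hj
  · interval_cases j <;> norm_num
  · have : 3 * 2 ^ j ≤ j * 2 ^ j := Nat.mul_le_mul_right _ hj
    zify [show 1 ≤ 2 ^ j * 2 by omega] at this ⊢
    nlinarith

theorem sub_one_mul_two_pow_sub_one_le {k : ℕ} (hk : 2 ≤ k) :
    (k - 1) * (2 ^ (k - 1) - 1) ≤ (3 * k - 5) * 2 ^ (k - 2) := by
  obtain ⟨j, rfl⟩ : ∃ j, k = j + 2 := ⟨k - 2, by omega⟩
  simp only [show j + 2 - 1 = j + 1 by omega, show j + 2 - 2 = j by omega,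
    show 3 * (j + 2) - 5 = 3 * j + 1 by omega, pow_succ]
  rcases Nat.eq_zero_or_pos j with rfl | hj
  · norm_num
  · have : 2 ^ j ≤ j * 2 ^ j := Nat.le_mul_of_pos_left _ hj
    zify [show 1 ≤ 2 ^ j * 2 from Nat.one_le_iff_ne_zero.mpr (by positivity)] at this ⊢
    nlinarith

theorem exists_split_of_inIntervalChain {k : ℕ} (hk : 2 ≤ k) {S : Finset (Finset ℕ)}
    (hS : ∀ G ∈ S, InIntervalChain k G) {t : ℕ} (ht : 0 < t) (htS : t ≤ #S) :
    ∃ B ⊆ S, #B = t ∧ ∃ p, (∀ G ∈ B, G ⊆ range p) ∧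
      #S ≤ t + #{G ∈ S \ B | range p ⊆ G} + (3 * k - 5) * 2 ^ (k - 2) := by
  obtain ⟨B, hBS, hBt, hBkey⟩ := exists_subset_card_eq_forall_le splitKey S htS
  obtain ⟨Gt, hGtB, hGtmax⟩ := B.exists_max_image splitKey (card_pos.mp (hBt ▸ ht))
  set p := rangeBound Gt
  have hGtp : Gt ⊆ range p := subset_range_iff_rangeBound_le.mpr le_rfl
  refine ⟨B, hBS, hBt, p, fun G hG => subset_range_iff_rangeBound_le.mpr
    (rangeBound_le_of_splitKey_le (hGtmax G hG)), ?_⟩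
  set D := {G ∈ S \ B | ¬ range p ⊆ G}
  have hcard : #S = t + #{G ∈ S \ B | range p ⊆ G} + #D := by
    rw [add_assoc, card_filter_add_card_filter_not, card_sdiff_of_subset hBS]; omega
  have hD : ∀ G ∈ D, InIntervalChain k G ∧ ¬ range p ⊆ G ∧ splitKey Gt ≤ splitKey G := by
    intro G hG
    obtain ⟨hG, hpG⟩ := mem_filter.mp hG
    exact ⟨hS G (mem_sdiff.mp hG).1, hpG, hBkey Gt hGtB G hG⟩
  suffices #D ≤ (3 * k - 5) * 2 ^ (k - 2) by omega
  -- If `Gt = range p`, the key puts every discarded set above `range p`; otherwise `Gt` itself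
  -- neither contains `range p` nor lies in `range (p - 1)`, and is counted with the discarded sets.
  by_cases hspine : Gt = range p
  · have hDcard := card_le_of_not_range_subset_of_not_subset_range (p := p) (q := p) p.le_succ
      fun G hG => by
        obtain ⟨hGk, hpG, hGkey⟩ := hD G hG
        refine ⟨hGk, hpG, fun hGp => hpG ?_⟩
        rw [← hspine, eq_of_splitKey_le hspine hGkey (subset_range_iff_rangeBound_le.mp hGp)]
    rw [show p + k - 1 - p = k - 1 by omega] at hDcard
    exact hDcard.trans (sub_one_mul_two_pow_sub_one_le hk)
  · have hp : 0 < p := Nat.pos_of_ne_zero fun h0 => hspine <| by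
      rw [h0, range_zero] at hGtp ⊢
      exact subset_empty.mp hGtp
    have hGtD : Gt ∉ D := fun h => (mem_sdiff.mp (mem_filter.mp h).1).2 hGtB
    have hDcard := card_le_of_not_range_subset_of_not_subset_range (S := insert Gt D)
      (p := p) (q := p - 1) (by omega) fun G hG => by
        rcases mem_insert.mp hG with rfl | hG
        · refine ⟨hS G (hBS hGtB), fun hpG => hspine (subset_antisymm hGtp hpG), fun h => ?_⟩
          have := subset_range_iff_rangeBound_le.mp h
          omega
        · obtain ⟨hGk, hpG, hGkey⟩ := hD G hG
          refine ⟨hGk, hpG, fun h => ?_⟩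
          have := subset_range_iff_rangeBound_le.mp h
          have := rangeBound_le_of_splitKey_le hGkey
          omega
    rw [card_insert_of_notMem hGtD, show p + k - 1 - (p - 1) = k by omega] at hDcard
    have := mul_two_pow_sub_one_le hk
    omega

theorem Finset.exists_injOn_mapsTo_of_card_le {α β : Type*} [Nonempty β] {s : Finset α}
    {t : Finset β} (h : #s ≤ #t) : ∃ f : α → β, Set.InjOn f s ∧ Set.MapsTo f s t := by
  obtain ⟨f, hf, hinj⟩ := s.finite_toSet.exists_injOn_of_encard_le (t := (t : Set β))
    (by simpa only [Set.encard_coe_eq_coe_finsetCard, Nat.cast_le] using h)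
  exact ⟨f, hinj, hf⟩

section Embedding

variable {P : Type*} [PartialOrder P]

theorem chain_card_le_of_sdiff [DecidableEq P] {T L : Finset P} {h : ℕ}
    (hT : ∀ s ⊆ T, IsChain (· ≤ ·) (s : Set P) → #s ≤ h + 1) (hLT : L ⊆ T)
    (hL : ∀ x ∈ T, ∃ z ∈ L, z ≤ x) :
    ∀ s ⊆ T \ L, IsChain (· ≤ ·) (s : Set P) → #s ≤ h := by
  intro s hs hchain
  rcases s.eq_empty_or_nonempty with rfl | hne
  · simp
  obtain ⟨m, hm⟩ := s.exists_minimal hne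
  have hm_le : ∀ b ∈ s, m ≤ b := fun b hb =>
    (hchain.total hm.prop hb).elim id (hm.le_of_le hb)
  obtain ⟨z, hzL, hzm⟩ := hL m (mem_sdiff.mp (hs hm.prop)).1
  have hzs : z ∉ s := fun hz => (mem_sdiff.mp (hs hz)).2 hzL
  have := hT (insert z s) (insert_subset (hLT hzL) (hs.trans sdiff_subset)) (by
    rw [coe_insert]
    exact hchain.insert fun b hb _ => Or.inl (hzm.trans (hm_le b hb)))
  rw [card_insert_of_notMem hzs] at this
  omega

theorem piecewise_embedding {α : Type*} [Preorder α] [DecidableEq P] {T L : Finset P}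
    (hL : ∀ y ∈ L, ∀ x ∈ T, x ≤ y → x = y) {X Y : Set α} (hXY : Disjoint X Y)
    (hle : ∀ a ∈ X, ∀ b ∈ Y, a ≤ b) {ψ φ : P → α} (hψ : Set.InjOn ψ L) (hψX : Set.MapsTo ψ L X)
    (hφ : Set.InjOn φ ↑(T \ L)) (hφY : Set.MapsTo φ ↑(T \ L) Y)
    (hφmono : ∀ x ∈ T \ L, ∀ y ∈ T \ L, x ≤ y → φ x ≤ φ y) :
    Set.InjOn (L.piecewise ψ φ) T ∧ Set.MapsTo (L.piecewise ψ φ) T (X ∪ Y) ∧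
      ∀ x ∈ T, ∀ y ∈ T, x ≤ y → L.piecewise ψ φ x ≤ L.piecewise ψ φ y := by
  have hrest : ∀ {x}, x ∈ T → x ∉ L → x ∈ T \ L := fun hx hxL => mem_sdiff.mpr ⟨hx, hxL⟩
  have hne : ∀ x ∈ L, ∀ y ∈ T, y ∉ L → ψ x ≠ φ y := fun x hxL y hy hyL =>
    hXY.ne_of_mem (hψX hxL) (hφY (hrest hy hyL))
  refine ⟨fun x hx y hy heq => ?_, fun x hx => ?_, fun x hx y hy hxy => ?_⟩
  · simp only [mem_coe] at hx hy
    by_cases hxL : x ∈ L <;> by_cases hyL : y ∈ L <;>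
      simp only [piecewise_eq_of_mem, piecewise_eq_of_notMem, hxL, hyL, not_false_eq_true] at heq
    · exact hψ hxL hyL heq
    · exact absurd heq (hne x hxL y hy hyL)
    · exact absurd heq.symm (hne y hyL x hx hxL)
    · exact hφ (hrest hx hxL) (hrest hy hyL) heq
  · by_cases hxL : x ∈ L
    · rw [piecewise_eq_of_mem _ _ _ hxL]; exact Or.inl (hψX hxL)
    · rw [piecewise_eq_of_notMem _ _ _ hxL]; exact Or.inr (hφY (hrest hx hxL))
  · by_cases hyL : y ∈ L
    · rw [hL y hyL x hx hxy]
    rw [piecewise_eq_of_notMem _ _ _ hyL]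
    by_cases hxL : x ∈ L
    · rw [piecewise_eq_of_mem _ _ _ hxL]; exact hle _ (hψX hxL) _ (hφY (hrest hy hyL))
    · rw [piecewise_eq_of_notMem _ _ _ hxL]; exact hφmono x (hrest hx hxL) y (hrest hy hyL) hxy

theorem exists_embedding_of_inIntervalChain {k : ℕ} (hk : 2 ≤ k) (h : ℕ) {T : Finset P}
    (hT : ∀ s ⊆ T, IsChain (· ≤ ·) (s : Set P) → #s ≤ h + 1) {S : Finset (Finset ℕ)}
    (hS : ∀ G ∈ S, InIntervalChain k G) (hcard : #T + (3 * k - 5) * 2 ^ (k - 2) * h ≤ #S) :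
    ∃ φ : P → Finset ℕ, Set.InjOn φ T ∧ Set.MapsTo φ T S ∧
      ∀ x ∈ T, ∀ y ∈ T, x ≤ y → φ x ⊆ φ y := by
  classical
  induction h generalizing T S with
  | zero =>
    obtain ⟨φ, hφ, hφS⟩ := exists_injOn_mapsTo_of_card_le (by simpa using hcard)
    refine ⟨φ, hφ, hφS, fun x hx y hy hxy => ?_⟩
    obtain rfl : x = y := by
      by_contra hne
      have := hT {x, y} (insert_subset hx (singleton_subset_iff.mpr hy))
        (by rw [coe_pair]; exact IsChain.pair hxy)
      rw [card_pair hne] at this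
      omega
    rfl
  | succ h ih =>
    rcases T.eq_empty_or_nonempty with rfl | ⟨x₀, hx₀⟩
    · exact ⟨fun _ => ∅, by simp, by simp [Set.MapsTo], by simp⟩
    set L := {x ∈ T | Minimal (· ∈ T) x}
    have hLT : L ⊆ T := filter_subset _ _
    have hL : ∀ x ∈ T, ∃ z ∈ L, z ≤ x := fun x hx => by
      obtain ⟨z, hzx, hz⟩ := T.exists_le_minimal hx
      exact ⟨z, mem_filter.mpr ⟨hz.prop, hz⟩, hzx⟩
    have hLpos : 0 < #L := by
      obtain ⟨z, hz, -⟩ := hL x₀ hx₀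
      exact card_pos.mpr ⟨z, hz⟩
    obtain ⟨B, hBS, hBL, p, hBp, hsplit⟩ := exists_split_of_inIntervalChain hk hS hLpos
      ((card_le_card hLT).trans ((Nat.le_add_right _ _).trans hcard))
    set R := {G ∈ S \ B | range p ⊆ G}
    obtain ⟨φ, hφ, hφR, hφmono⟩ := ih (T := T \ L) (S := R)
      (chain_card_le_of_sdiff hT hLT hL)
      (fun G hG => hS G (mem_sdiff.mp (mem_filter.mp hG).1).1) (by
        rw [card_sdiff_of_subset hLT]
        have : #L ≤ #T := card_le_card hLT
        rw [Nat.mul_succ] at hcard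
        omega)
    obtain ⟨ψ, hψ, hψB⟩ := exists_injOn_mapsTo_of_card_le hBL.ge
    obtain ⟨hinj, hmaps, hmono⟩ := piecewise_embedding (X := B) (Y := R)
      (fun y hy x hx hxy => (mem_filter.mp hy).2.eq_of_le hx hxy)
      (disjoint_coe.mpr (disjoint_left.mpr fun G hGB hG =>
        (mem_sdiff.mp (mem_filter.mp hG).1).2 hGB))
      (fun G hG G' hG' => (hBp G hG).trans (mem_filter.mp hG').2) hψ hψB hφ hφR hφmono
    refine ⟨L.piecewise ψ φ, hinj, fun x hx => ?_, hmono⟩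
    rcases hmaps hx with hx | hx
    · exact hBS hx
    · exact (mem_sdiff.mp (mem_filter.mp hx).1).1

end Embedding

section Counting

open Nat

def gapSet (f : ℕ) (Q : Finset ℕ) : Finset ℕ :=
  range (f - #Q) ∪ Q.map (addLeftEmbedding (f - #Q + 1))

theorem mem_gapSet {f x : ℕ} {Q : Finset ℕ} :
    x ∈ gapSet f Q ↔ x < f - #Q ∨ ∃ s ∈ Q, f - #Q + 1 + s = x := by
  simp [gapSet]

theorem disjoint_gapSet (f : ℕ) (Q : Finset ℕ) :
    Disjoint (range (f - #Q)) (Q.map (addLeftEmbedding (f - #Q + 1))) :=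
  disjoint_left.mpr fun x hx hx' => by
    simp only [mem_range, mem_map, addLeftEmbedding_apply] at hx hx'
    obtain ⟨s, -, rfl⟩ := hx'
    omega

theorem card_gapSet {f : ℕ} {Q : Finset ℕ} (hQ : #Q ≤ f) : #(gapSet f Q) = f := by
  rw [gapSet, card_union_of_disjoint (disjoint_gapSet f Q), card_range, card_map]
  omega

theorem firstGap_gapSet (f : ℕ) (Q : Finset ℕ) : firstGap (gapSet f Q) = f - #Q :=
  firstGap_eq subset_union_left fun h => by
    rcases mem_gapSet.mp h with h | ⟨s, -, h⟩ <;> omega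

theorem gapSet_injOn (f : ℕ) : Set.InjOn (gapSet f) {Q | #Q ≤ f} := by
  intro Q hQ Q' hQ' h
  have hcard : #Q = #Q' := by
    have := congrArg firstGap h
    rw [firstGap_gapSet, firstGap_gapSet] at this
    have : #Q ≤ f := hQ
    have : #Q' ≤ f := hQ'
    omega
  have := congrArg (· \ range (f - #Q)) h
  simp only [gapSet, hcard, union_sdiff_cancel_left (disjoint_gapSet f Q')] at this
  rw [← hcard, union_sdiff_cancel_left (disjoint_gapSet f Q)] at this
  exact map_injective _ this

theorem two_pow_le_card_inIntervalChain {n k f : ℕ} (hkf : k - 1 ≤ f) (hfn : f + (k - 1) ≤ n) :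
    2 ^ (k - 1) ≤ #{V ∈ (range n).powersetCard f | InIntervalChain k V} := by
  have hQlt : ∀ Q ∈ (range (k - 1)).powerset, ∀ s ∈ Q, s < k - 1 := fun Q hQ s hs =>
    mem_range.mp (mem_powerset.mp hQ hs)
  have hQcard : ∀ Q ∈ (range (k - 1)).powerset, #Q ≤ k - 1 := fun Q hQ => by
    simpa using card_le_card (mem_powerset.mp hQ)
  calc 2 ^ (k - 1) = #(range (k - 1)).powerset := by rw [card_powerset, card_range]
    _ ≤ _ := by
      refine card_le_card_of_injOn (gapSet f) (fun Q hQmem => ?_)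
        ((gapSet_injOn f).mono fun Q hQmem => (hQcard Q hQmem).trans hkf)
      have hq := hQcard Q hQmem
      simp only [coe_filter, mem_powersetCard, Set.mem_ofPred_eq]
      refine ⟨⟨fun x hx => mem_range.mpr ?_, card_gapSet (by omega)⟩,
        f - #Q, subset_union_left, fun x hx => mem_range.mpr ?_⟩
      · rcases mem_gapSet.mp hx with hx | ⟨s, hs, rfl⟩
        · omega
        · have := hQlt Q hQmem s hs
          have := card_pos.mpr ⟨s, hs⟩
          omega
      · rcases mem_gapSet.mp hx with hx | ⟨s, hs, rfl⟩
        · omega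
        · have := hQlt Q hQmem s hs
          omega

theorem two_pow_mul_choose_le {n k f : ℕ} (hn : 0 < n) (hfn : f ≤ n)
    (hC : 2 ^ (k - 1) * n ^ (k - 1) ≤ n.choose (n / 2)) :
    2 ^ (k - 1) * n.choose f ≤
      #{V ∈ (range n).powersetCard f | InIntervalChain k V} * n.choose (n / 2) := by
  by_cases hmid : k - 1 ≤ f ∧ f + (k - 1) ≤ n
  · exact Nat.mul_le_mul (two_pow_le_card_inIntervalChain hmid.1 hmid.2) (choose_le_middle f n)
  · have hpos : 1 ≤ #{V ∈ (range n).powersetCard f | InIntervalChain k V} :=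
      card_pos.mpr ⟨range f, mem_filter.mpr ⟨mem_powersetCard.mpr
        ⟨range_subset_range.mpr hfn, card_range f⟩, inIntervalChain_range k f⟩⟩
    have hchoose : n.choose f ≤ n ^ (k - 1) := by
      rcases not_and_or.mp hmid with h | h
      · exact (choose_le_pow n f).trans (Nat.pow_le_pow_right hn (by omega))
      · rw [← choose_symm hfn]
        exact (choose_le_pow n _).trans (Nat.pow_le_pow_right hn (by omega))
    calc 2 ^ (k - 1) * n.choose f ≤ 2 ^ (k - 1) * n ^ (k - 1) := Nat.mul_le_mul_left _ hchoose
      _ ≤ 1 * n.choose (n / 2) := by rw [one_mul]; exact hC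
      _ ≤ _ := Nat.mul_le_mul_right _ hpos

theorem Finset.exists_perm_map_eq {α : Type*} [DecidableEq α] {U V : Finset α} (h : #U = #V) :
    ∃ τ : Equiv.Perm α, U.map τ.toEmbedding = V := by
  obtain ⟨τ, hτ⟩ := (Set.powersetCard.isPretransitive (n := #V)).exists_smul_eq
    ⟨U, h⟩ ⟨V, rfl⟩
  refine ⟨τ, ?_⟩
  have := congrArg Subtype.val hτ
  simp only [Set.powersetCard.coe_smul] at this
  rw [← this, smul_finset_def, map_eq_image]
  rfl

theorem Finset.card_perm_map_eq_mul_choose {α : Type*} [Fintype α] [DecidableEq α]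
    {F U : Finset α} (h : #U = #F) :
    #{σ : Equiv.Perm α | F.map σ.toEmbedding = U} * (Fintype.card α).choose #F =
      (Fintype.card α)! := by
  have hfiber : ∀ V ∈ (univ : Finset α).powersetCard #F,
      #{σ : Equiv.Perm α | F.map σ.toEmbedding = V} =
        #{σ : Equiv.Perm α | F.map σ.toEmbedding = U} := by
    intro V hV
    obtain ⟨τ, hτ⟩ := exists_perm_map_eq (h.trans (mem_powersetCard.mp hV).2.symm)
    have hmul : ∀ τ σ : Equiv.Perm α,
        F.map (τ * σ).toEmbedding = (F.map σ.toEmbedding).map τ.toEmbedding := fun τ σ => by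
      rw [map_map]; rfl
    have hinv : (V.map τ⁻¹.toEmbedding) = U := by
      rw [← hτ, map_map]; ext; simp
    refine card_nbij' (τ⁻¹ * ·) (τ * ·) ?_ ?_ (fun σ _ => by simp) (fun σ _ => by simp)
    · intro σ hσ
      simp only [coe_filter, mem_univ, true_and, Set.mem_ofPred_eq] at hσ ⊢
      rw [hmul, hσ, hinv]
    · intro σ hσ
      simp only [coe_filter, mem_univ, true_and, Set.mem_ofPred_eq] at hσ ⊢
      rw [hmul, hσ, hτ]
  calc _ = ∑ V ∈ (univ : Finset α).powersetCard #F,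
        #{σ : Equiv.Perm α | F.map σ.toEmbedding = V} := by
        rw [sum_congr rfl hfiber, sum_const, card_powersetCard, card_univ, smul_eq_mul, mul_comm]
    _ = (Fintype.card α)! := by
        rw [← card_eq_sum_card_fiberwise (fun σ _ => by simp), card_univ, Fintype.card_perm]
/-- `F` lies in the `k`-interval chain of the maximal chain `(σ⁻¹ {0, …, i - 1})ᵢ` iff
`InIntervalChain k (chainPos σ F)`. -/
def chainPos {n : ℕ} (σ : Equiv.Perm (Fin n)) : Finset (Fin n) ↪o Finset ℕ :=
  mapEmbedding (σ.toEmbedding.trans Fin.valEmbedding)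

theorem card_perm_inIntervalChain_mul_choose {n : ℕ} (k : ℕ) (F : Finset (Fin n)) :
    #{σ : Equiv.Perm (Fin n) | InIntervalChain k (chainPos σ F)} * n.choose #F =
      n ! * #{V ∈ (range n).powersetCard #F | InIntervalChain k V} := by
  set 𝒰 := {U ∈ (univ : Finset (Fin n)).powersetCard #F |
    InIntervalChain k (U.map Fin.valEmbedding)}
  have hchainPos : ∀ σ : Equiv.Perm (Fin n),
      chainPos σ F = (F.map σ.toEmbedding).map Fin.valEmbedding := fun σ => (map_map _ _ _).symm
  have hfiber := card_eq_sum_card_fiberwise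
    (s := {σ : Equiv.Perm (Fin n) | InIntervalChain k (chainPos σ F)})
    (t := 𝒰) (f := fun σ => F.map σ.toEmbedding) (fun σ hσ => by
      simp only [coe_filter, mem_univ, true_and, Set.mem_ofPred_eq, hchainPos] at hσ
      simp [𝒰, hσ])
  have h𝒰 : #𝒰 = #{V ∈ (range n).powersetCard #F | InIntervalChain k V} := by
    rw [← Nat.Iio_eq_range, ← Fin.map_valEmbedding_univ, powersetCard_map, filter_map, card_map]
    rfl
  rw [hfiber, sum_mul, ← h𝒰, card_eq_sum_ones 𝒰, mul_sum, mul_one]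
  refine sum_congr rfl fun U hU => ?_
  obtain ⟨hU, hUk⟩ := mem_filter.mp hU
  have hU := card_perm_map_eq_mul_choose (F := F) (mem_powersetCard.mp hU).2
  simp only [Fintype.card_fin] at hU
  convert hU using 3
  ext σ
  simp only [mem_filter, mem_univ, true_and, and_iff_right_iff_imp]
  intro h
  rwa [hchainPos, h]

theorem two_pow_mul_factorial_le {n k : ℕ} (hn : 0 < n)
    (hC : 2 ^ (k - 1) * n ^ (k - 1) ≤ n.choose (n / 2)) (F : Finset (Fin n)) :
    2 ^ (k - 1) * n ! ≤
      #{σ : Equiv.Perm (Fin n) | InIntervalChain k (chainPos σ F)} * n.choose (n / 2) := by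
  have hF : #F ≤ n := by simpa using card_le_univ F
  have hcount := card_perm_inIntervalChain_mul_choose k F
  have hbound := two_pow_mul_choose_le hn hF hC
  refine Nat.le_of_mul_le_mul_right ?_ (choose_pos hF)
  calc 2 ^ (k - 1) * n ! * n.choose #F = n ! * (2 ^ (k - 1) * n.choose #F) := by ring
    _ ≤ n ! * (#{V ∈ (range n).powersetCard #F | InIntervalChain k V} * n.choose (n / 2)) :=
        Nat.mul_le_mul_left _ hbound
    _ = _ := by rw [← mul_assoc, ← hcount]; ring

theorem two_pow_le_succ_mul_choose_half (n : ℕ) : 2 ^ n ≤ (n + 1) * n.choose (n / 2) := by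
  calc 2 ^ n = ∑ i ∈ range (n + 1), n.choose i := (sum_range_choose n).symm
    _ ≤ ∑ _i ∈ range (n + 1), n.choose (n / 2) := sum_le_sum fun i _ => choose_le_middle i n
    _ = (n + 1) * n.choose (n / 2) := by rw [sum_const, card_range, smul_eq_mul]

theorem eventually_mul_pow_le_choose_half (c j : ℕ) :
    ∀ᶠ n : ℕ in Filter.atTop, c * n ^ j ≤ n.choose (n / 2) := by
  have hlittle := ((isLittleO_pow_const_const_pow_of_one_lt (R := ℝ) (j + 1) one_lt_two)
    |>.const_mul_left (2 * c : ℝ)).bound one_pos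
  filter_upwards [hlittle, Filter.eventually_ge_atTop 1] with n hexp hn
  rw [Real.norm_eq_abs, Real.norm_eq_abs, abs_of_nonneg (by positivity),
    abs_of_nonneg (by positivity), one_mul] at hexp
  have hexp' : 2 * c * n ^ (j + 1) ≤ 2 ^ n := by exact_mod_cast hexp
  refine Nat.le_of_mul_le_mul_left ?_ (Nat.succ_pos n)
  calc (n + 1) * (c * n ^ j) ≤ 2 * c * n ^ (j + 1) := by
        rw [pow_succ]
        nlinarith [Nat.zero_le (c * n ^ j)]
    _ ≤ 2 ^ n := hexp'
    _ ≤ (n + 1) * n.choose (n / 2) := two_pow_le_succ_mul_choose_half n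

end Counting

theorem Finset.mul_card_le_of_double_counting {α β : Type*} [Fintype α] (A : Finset β)
    (r : α → β → Prop) [∀ a b, Decidable (r a b)] {a b M : ℕ}
    (hα : ∀ σ, #{F ∈ A | r σ F} ≤ M) (hβ : ∀ F ∈ A, a ≤ #{σ | r σ F} * b) :
    a * #A ≤ M * Fintype.card α * b := by
  calc a * #A = ∑ F ∈ A, a := by rw [sum_const, smul_eq_mul, mul_comm]
    _ ≤ ∑ F ∈ A, #{σ | r σ F} * b := sum_le_sum hβ
    _ = (∑ σ, #{F ∈ A | r σ F}) * b := by
        rw [← sum_mul]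
        exact congrArg (· * b) (sum_card_bipartiteAbove_eq_sum_card_bipartiteBelow r).symm
    _ ≤ (∑ _σ : α, M) * b := Nat.mul_le_mul_right _ (sum_le_sum fun σ _ => hα σ)
    _ = M * Fintype.card α * b := by rw [sum_const, card_univ, smul_eq_mul, mul_comm M]

theorem containsWeak_of_orderEmbedding {n : ℕ} {𝒜 : Finset (Finset (Fin n))} {P β : Type*}
    [PartialOrder P] [Preorder β] (g : Finset (Fin n) ↪o β) {φ : P → β}
    (hinj : Function.Injective φ) (hmem : ∀ x, φ x ∈ 𝒜.map g.toEmbedding) (hmono : Monotone φ) :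
    containsWeak 𝒜 P := by
  choose ψ hψ𝒜 hψ using fun x => mem_map.mp (hmem x)
  refine ⟨ψ, fun x y hxy => hinj ?_, hψ𝒜, fun x y hxy => ?_⟩
  · rw [← hψ x, ← hψ y, hxy]
  · exact g.le_iff_le.mp ((hψ x).trans_le ((hmono hxy).trans_eq (hψ y).symm))

theorem card_filter_inIntervalChain_lt {P : Type*} [PartialOrder P] [Fintype P] {h k n : ℕ}
    (hk : 2 ≤ k) (hh : ∀ s : Finset P, IsChain (· ≤ ·) (s : Set P) → #s ≤ h)
    {𝒜 : Finset (Finset (Fin n))} (h𝒜 : ¬ containsWeak 𝒜 P) (σ : Equiv.Perm (Fin n)) :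
    #{F ∈ 𝒜 | InIntervalChain k (chainPos σ F)} <
      Fintype.card P + (3 * k - 5) * 2 ^ (k - 2) * (h - 1) := by
  by_contra! hcard
  rcases isEmpty_or_nonempty P with hP | ⟨⟨x⟩⟩
  · exact h𝒜 ⟨isEmptyElim, fun x => isEmptyElim x, isEmptyElim, fun x => isEmptyElim x⟩
  have hh1 : 1 ≤ h := by simpa using hh {x} (by simp)
  obtain ⟨φ, hφ, hφS, hφmono⟩ := exists_embedding_of_inIntervalChain hk (h - 1) (T := univ)
    (fun s _ hs => (hh s hs).trans (by omega))
    (S := {F ∈ 𝒜 | InIntervalChain k (chainPos σ F)}.map (chainPos σ).toEmbedding)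
    (fun G hG => by
      obtain ⟨F, hF, rfl⟩ := mem_map.mp hG
      exact (mem_filter.mp hF).2)
    (by rwa [card_univ, card_map])
  refine h𝒜 (containsWeak_of_orderEmbedding (chainPos σ) (φ := φ)
    (by simpa using hφ) (fun x => ?_) (fun x y hxy => hφmono x (mem_univ x) y (mem_univ y) hxy))
  exact map_subset_map.mpr (filter_subset _ _) (hφS (mem_univ x))

/-- For any fixed poset `P` and fixed `k ≥ 2`, for all sufficiently large `n`, every
`P`-free family `𝒜 ⊆ 2^[n]` satisfies
`|𝒜| ≤ (1/2^{k-1})(|P| + (3k-5)2^{k-2}(h(P)-1) - 1)·C(n,⌊n/2⌋)`. -/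
theorem La_upper_bound_interval_chain
    (P : Type*) [PartialOrder P] [Fintype P] (h k : ℕ) (hh : isHeight P h) (hk : 2 ≤ k) :
    ∃ N : ℕ, ∀ n ≥ N, ∀ 𝒜 : Finset (Finset (Fin n)), ¬ containsWeak 𝒜 P →
      2 ^ (k - 1) * 𝒜.card ≤
        (Fintype.card P + (3 * k - 5) * 2 ^ (k - 2) * (h - 1) - 1) * n.choose (n / 2) := by
  obtain ⟨N, hN⟩ :=
    Filter.eventually_atTop.mp (eventually_mul_pow_le_choose_half (2 ^ (k - 1)) (k - 1))
  refine ⟨N + 1, fun n hn 𝒜 h𝒜 => ?_⟩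
  have hcount := mul_card_le_of_double_counting 𝒜 (fun σ F => InIntervalChain k (chainPos σ F))
    (fun σ => Nat.le_sub_one_of_lt (card_filter_inIntervalChain_lt hk hh.2 h𝒜 σ))
    (fun F _ => two_pow_mul_factorial_le (by omega) (hN n (by omega)) F)
  rw [Fintype.card_perm, Fintype.card_fin] at hcount
  refine Nat.le_of_mul_le_mul_right ?_ (Nat.factorial_pos n)
  calc 2 ^ (k - 1) * #𝒜 * n.factorial = 2 ^ (k - 1) * n.factorial * #𝒜 := by ring
    _ ≤ _ := hcount
    _ = _ := by ring
end

section
/- If P is a finite poset with a unique maximal element and Q is a finite poset with a unique minimal element, then La(n, P⊗Q) ≤ La(n,P) + La(n,Q), where P⊗Q is the poset obtained by identifying the maximal element of P with the minimal element of Q. -/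
/-- `R` is (isomorphic to) the product poset `P ⊗ Q`, obtained by identifying the
greatest element `p₀` of `P` with the least element `q₀` of `Q`, via the inclusion maps
`i : P → R` and `j : Q → R`. -/
structure IsOtimes (P Q R : Type*) [PartialOrder P] [PartialOrder Q] [PartialOrder R]
    (p₀ : P) (q₀ : Q) (i : P → R) (j : Q → R) : Prop where
  top_p : ∀ x : P, x ≤ p₀
  bot_q : ∀ y : Q, q₀ ≤ y
  glue : i p₀ = j q₀
  inj_i : Function.Injective i
  inj_j : Function.Injective j
  cover : ∀ r : R, (∃ x, i x = r) ∨ (∃ y, j y = r)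
  overlap : ∀ x y, i x = j y → x = p₀ ∧ y = q₀
  le_i : ∀ x y : P, i x ≤ i y ↔ x ≤ y
  le_j : ∀ x y : Q, j x ≤ j y ↔ x ≤ y
  i_le_j : ∀ (x : P) (y : Q), i x ≤ j y
  j_le_i : ∀ (x : P) (y : Q), j y ≤ i x ↔ (y = q₀ ∧ x = p₀)

/-- `La(n, P⊗Q) ≤ La(n,P) + La(n,Q)`: if `LP` bounds every `P`-free family and `LQ`
bounds every `Q`-free family (in particular `LP = La(n,P)`, `LQ = La(n,Q)`), then every
`P⊗Q`-free family has size at most `LP + LQ`. -/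
theorem La_otimes_le (n : ℕ) (P Q R : Type*) [PartialOrder P] [PartialOrder Q]
    [PartialOrder R] [Fintype P] [Fintype Q] [Fintype R]
    (p₀ : P) (q₀ : Q) (i : P → R) (j : Q → R) (hR : IsOtimes P Q R p₀ q₀ i j)
    (LP LQ : ℕ)
    (hLP : ∀ ℬ : Finset (Finset (Fin n)), ¬ containsWeak ℬ P → ℬ.card ≤ LP)
    (hLQ : ∀ ℬ : Finset (Finset (Fin n)), ¬ containsWeak ℬ Q → ℬ.card ≤ LQ) :
    ∀ 𝒜 : Finset (Finset (Fin n)), ¬ containsWeak 𝒜 R → 𝒜.card ≤ LP + LQ := by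
  classical
  intro 𝒜 h𝒜
  -- `prop A` : `A` is the top of a weak copy of `P` in `𝒜`
  set prop : Finset (Fin n) → Prop := fun A =>
    ∃ φ : P → Finset (Fin n), Function.Injective φ ∧ (∀ x, φ x ∈ 𝒜) ∧
      (∀ x y : P, x ≤ y → φ x ⊆ φ y) ∧ φ p₀ = A with hprop
  have h1 : (𝒜.filter (fun A => ¬ prop A)).card ≤ LP := by
    apply hLP
    rintro ⟨φ, hinj, hmem, hmono⟩
    have hp : prop (φ p₀) :=
      ⟨φ, hinj, fun x => (Finset.mem_filter.mp (hmem x)).1, hmono, rfl⟩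
    exact (Finset.mem_filter.mp (hmem p₀)).2 hp
  have h2 : (𝒜.filter prop).card ≤ LQ := by
    apply hLQ
    rintro ⟨ψ, hψinj, hψmem, hψmono⟩
    have hψ𝒜 : ∀ y, ψ y ∈ 𝒜 := fun y => (Finset.mem_filter.mp (hψmem y)).1
    obtain ⟨φ, hφinj, hφmem, hφmono, hglue⟩ := (Finset.mem_filter.mp (hψmem q₀)).2
    apply h𝒜
    set χ : R → Finset (Fin n) := fun r =>
      if h : ∃ x, i x = r then φ h.choose
      else ψ ((hR.cover r).resolve_left h).choose with hχ
    have hχi : ∀ x, χ (i x) = φ x := by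
      intro x
      have h : ∃ z, i z = i x := ⟨x, rfl⟩
      simp only [hχ, dif_pos h]
      exact congrArg φ (hR.inj_i h.choose_spec)
    have hχj : ∀ y, χ (j y) = ψ y := by
      intro y
      by_cases h : ∃ x, i x = j y
      · simp only [hχ, dif_pos h]
        obtain ⟨hx, hy⟩ := hR.overlap h.choose y h.choose_spec
        rw [hx, hglue, hy]
      · simp only [hχ, dif_neg h]
        exact congrArg ψ (hR.inj_j ((hR.cover (j y)).resolve_left h).choose_spec)
    have hmix : ∀ x y, φ x = ψ y → x = p₀ ∧ y = q₀ := by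
      intro x y hxy
      have hsub1 : φ x ⊆ ψ q₀ := by
        rw [← hglue]; exact hφmono x p₀ (hR.top_p x)
      have hsub2 : ψ q₀ ⊆ ψ y := hψmono q₀ y (hR.bot_q y)
      have e : ψ q₀ = ψ y := Finset.Subset.antisymm hsub2 (by rw [← hxy]; exact hsub1)
      have hy : y = q₀ := (hψinj e).symm
      have hx : x = p₀ := hφinj (by rw [hxy, hy, ← hglue])
      exact ⟨hx, hy⟩
    refine ⟨χ, ?_, ?_, ?_⟩
    · intro r r' hrr'
      rcases hR.cover r with ⟨x, rfl⟩ | ⟨y, rfl⟩ <;>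
        rcases hR.cover r' with ⟨x', rfl⟩ | ⟨y', rfl⟩
      · rw [hχi, hχi] at hrr'; exact congrArg i (hφinj hrr')
      · rw [hχi, hχj] at hrr'
        obtain ⟨hx, hy⟩ := hmix x y' hrr'
        rw [hx, hy, hR.glue]
      · rw [hχj, hχi] at hrr'
        obtain ⟨hx, hy⟩ := hmix x' y hrr'.symm
        rw [hx, hy, hR.glue]
      · rw [hχj, hχj] at hrr'; exact congrArg j (hψinj hrr')
    · intro r
      rcases hR.cover r with ⟨x, rfl⟩ | ⟨y, rfl⟩
      · rw [hχi]; exact hφmem x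
      · rw [hχj]; exact hψ𝒜 y
    · intro r r' hle
      rcases hR.cover r with ⟨x, rfl⟩ | ⟨y, rfl⟩ <;>
        rcases hR.cover r' with ⟨x', rfl⟩ | ⟨y', rfl⟩
      · rw [hχi, hχi]; exact hφmono _ _ ((hR.le_i x x').mp hle)
      · rw [hχi, hχj]
        calc φ x ⊆ φ p₀ := hφmono _ _ (hR.top_p x)
          _ = ψ q₀ := hglue
          _ ⊆ ψ y' := hψmono _ _ (hR.bot_q y')
      · obtain ⟨hy, hx⟩ := (hR.j_le_i x' y).mp hle
        rw [hχj, hχi, hy, hx, hglue]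
      · rw [hχj, hχj]; exact hψmono _ _ ((hR.le_j y y').mp hle)
  calc 𝒜.card = (𝒜.filter (fun A => ¬ prop A)).card + (𝒜.filter prop).card := by
        rw [add_comm, Finset.card_filter_add_card_filter_not (p := prop)]
    _ ≤ LP + LQ := Nat.add_le_add h1 h2
end

section
/- Every finite poset P of height h is a weak subposet of the complete h-level poset K_{a_1,...,a_h}, where a_1,...,a_h are the sizes of the antichains in a Mirsky decomposition of P; and K_{a_1,...,a_h} is in turn a weak subposet of the product D_{a_1} ⊗ D_{a_2} ⊗ ... ⊗ D_{a_h}. -/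
/-!
Relabel each antichain `lvl⁻¹' {i}` of the Mirsky decomposition by `Fin (a i)`; this is a bijection
`P ≃ K_{a_1,…,a_h}` preserving levels, and it is monotone because `x < y` forces `lvl x < lvl y`.
Then `K_{a_1,…,a_h}` sits inside `D_{a_1} ⊗ … ⊗ D_{a_h}` by sending level `i` to the middle level
`2i + 1` of the `i`-th diamond, a strictly monotone relabelling of levels.
-/

/-- The "level poset" with `m` levels of sizes `f 0, …, f (m-1)`: every element of a
lower level is below every element of a higher level, and distinct elements of the same
level are incomparable. With all level sizes `f i = a i` this is the complete multilevel
poset `K_{a_1,…,a_m}`; with alternating sizes `1, a_1, 1, a_2, 1, …, a_m, 1` it is the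
product of generalized diamonds `D_{a_1} ⊗ D_{a_2} ⊗ … ⊗ D_{a_m}`. -/
structure LevelPoset (m : ℕ) (f : Fin m → ℕ) where
  level : Fin m
  idx : Fin (f level)

instance {m : ℕ} {f : Fin m → ℕ} : PartialOrder (LevelPoset m f) where
  le s t := s = t ∨ s.level < t.level
  le_refl s := Or.inl rfl
  le_trans s t u hst htu := by
    rcases hst with rfl | hst
    · exact htu
    · rcases htu with rfl | htu
      · exact Or.inr hst
      · exact Or.inr (hst.trans htu)
  le_antisymm s t hst hts := by
    rcases hst with rfl | hst
    · rfl
    · rcases hts with rfl | hts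
      · rfl
      · exact absurd hts (lt_asymm hst)

/-- The complete `h`-level poset `K_{a_1,…,a_h}`. -/
abbrev CompleteMultilevel (h : ℕ) (a : Fin h → ℕ) := LevelPoset h a

/-- The level-size function of the chained diamond product
`D_{a_1} ⊗ D_{a_2} ⊗ … ⊗ D_{a_h}`: levels `0,1,…,2h` where even levels are singletons
and the `(2i+1)`-st level has `a i` elements. -/
def diamondSizes (h : ℕ) (a : Fin h → ℕ) : Fin (2 * h + 1) → ℕ := fun ℓ =>
  if hℓ : (ℓ : ℕ) % 2 = 1 then a ⟨(ℓ : ℕ) / 2, by omega⟩ else 1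

/-- The product of generalized diamonds `D_{a_1} ⊗ D_{a_2} ⊗ … ⊗ D_{a_h}`. -/
abbrev DiamondProduct (h : ℕ) (a : Fin h → ℕ) := LevelPoset (2 * h + 1) (diamondSizes h a)

namespace LevelPoset

variable {m n : ℕ} {f : Fin m → ℕ} {g : Fin n → ℕ}

theorem monotone_of_level_lt {α : Type*} [PartialOrder α] {φ : α → LevelPoset m f}
    (hφ : ∀ x y, x < y → (φ x).level < (φ y).level) : Monotone φ := by
  intro x y hxy
  rcases hxy.eq_or_lt with rfl | hlt
  · exact le_rfl
  · exact Or.inr (hφ x y hlt)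

theorem level_lt_of_lt {s t : LevelPoset m f} (hst : s < t) : s.level < t.level :=
  hst.le.resolve_left hst.ne

def equivSigma : LevelPoset m f ≃ Σ i, Fin (f i) where
  toFun s := ⟨s.level, s.idx⟩
  invFun p := ⟨p.1, p.2⟩
  left_inv _ := rfl
  right_inv _ := rfl

noncomputable def equivOfCardFiber {α : Type*} [Finite α] (lvl : α → Fin m)
    (hcard : ∀ i, Nat.card {x // lvl x = i} = f i) : α ≃ LevelPoset m f :=
  (Equiv.sigmaFiberEquiv lvl).symm.trans <|
    (Equiv.sigmaCongrRight fun i => Finite.equivFinOfCardEq (hcard i)).trans equivSigma.symm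

def reindex (e : Fin m → Fin n) (hg : ∀ i, g (e i) = f i) (s : LevelPoset m f) :
    LevelPoset n g :=
  ⟨e s.level, Fin.cast (hg s.level).symm s.idx⟩

theorem reindex_injective {e : Fin m → Fin n} (he : Function.Injective e)
    (hg : ∀ i, g (e i) = f i) : Function.Injective (reindex e hg) := by
  rintro ⟨l, j⟩ ⟨l', j'⟩ hst
  obtain ⟨hl, hj⟩ := mk.inj hst
  obtain rfl := he hl
  obtain rfl := Fin.cast_injective _ (eq_of_heq hj)
  rfl

theorem reindex_monotone {e : Fin m → Fin n} (he : StrictMono e) (hg : ∀ i, g (e i) = f i) :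
    Monotone (reindex e hg) :=
  monotone_of_level_lt fun _ _ hst => he (level_lt_of_lt hst)

end LevelPoset

/-- The middle level of the `i`-th diamond in `D_{a_1} ⊗ … ⊗ D_{a_h}`. -/
def diamondMiddle (h : ℕ) (i : Fin h) : Fin (2 * h + 1) :=
  ⟨2 * i + 1, by omega⟩

theorem diamondMiddle_strictMono (h : ℕ) : StrictMono (diamondMiddle h) :=
  fun _ _ hij => Fin.mk_lt_mk.mpr (by omega)

theorem diamondSizes_diamondMiddle (h : ℕ) (a : Fin h → ℕ) (i : Fin h) :
    diamondSizes h a (diamondMiddle h i) = a i := by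
  simp [diamondSizes, diamondMiddle, Nat.mul_add_div]

/-- Every poset `P` with a Mirsky decomposition into `h` antichains of sizes
`a 0, …, a (h-1)` is a weak subposet of `K_{a_1,…,a_h}`, which in turn is a weak subposet
of `D_{a_1} ⊗ … ⊗ D_{a_h}`. Here `lvl : P → Fin h` records the Mirsky decomposition:
each fibre is an antichain of size `a i`, and `x < y` implies `lvl x < lvl y`. -/
theorem embed_into_complete_multilevel_and_diamonds
    (P : Type*) [PartialOrder P] [Fintype P] (h : ℕ) (a : Fin h → ℕ)
    (lvl : P → Fin h)
    (hmirsky : ∀ x y : P, x < y → lvl x < lvl y)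
    (hsizes : ∀ i : Fin h, Nat.card {x : P // lvl x = i} = a i) :
    (∃ φ : P → CompleteMultilevel h a, Function.Injective φ ∧
        ∀ x y : P, x ≤ y → φ x ≤ φ y) ∧
    (∃ ψ : CompleteMultilevel h a → DiamondProduct h a, Function.Injective ψ ∧
        ∀ x y : CompleteMultilevel h a, x ≤ y → ψ x ≤ ψ y) := by
  obtain ⟨φ, hφ⟩ : ∃ φ : P ≃ CompleteMultilevel h a, Monotone φ :=
    ⟨LevelPoset.equivOfCardFiber lvl hsizes, LevelPoset.monotone_of_level_lt hmirsky⟩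
  have hmiddle := diamondMiddle_strictMono h
  have hsizes' := diamondSizes_diamondMiddle h a
  exact ⟨⟨φ, φ.injective, fun _ _ hxy => hφ hxy⟩,
    ⟨LevelPoset.reindex _ hsizes', LevelPoset.reindex_injective hmiddle.injective hsizes',
      fun _ _ hxy => LevelPoset.reindex_monotone hmiddle hsizes' hxy⟩⟩
end

section
/- Let P be a finite poset and H ⊆ 2^[n] a family having exactly N sets of each cardinality i for a ≤ i ≤ b. If A ⊆ 2^[n] is a family with no induced copy of P and every set in A has cardinality between a and b, then the Lubell function satisfies l_n(A) = Σ_{A∈A} 1/C(n,|A|) ≤ α^#(H,P)/N, where α^#(H,P) is the maximum size of a subfamily of H with no induced copy of P. -/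
/-!
Katona's permutation averaging. For a permutation `σ` of `[n]`, the sets `S ∈ H` with
`σ S ∈ 𝒜` form an induced-`P`-free subfamily of `H`, so there are at most `α` of them.
Summing over all `n!` permutations, a pair `(S, A)` with `|S| = |A| = k` is hit by exactly
`n! / C(n, k)` of them (the permutations act transitively on `k`-sets), and every `A ∈ 𝒜` has
exactly `N` partners `S ∈ H`, whence `N n! Σ_{A ∈ 𝒜} 1 / C(n, |A|) ≤ n! α`.
-/

open Finset MulAction
open scoped Pointwise

def containsInduced {n : ℕ} (𝒜 : Finset (Finset (Fin n))) (P : Type*) [PartialOrder P] :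
    Prop :=
  ∃ φ : P → Finset (Fin n), Function.Injective φ ∧ (∀ x, φ x ∈ 𝒜) ∧
    ∀ x y : P, x ≤ y ↔ φ x ⊆ φ y

theorem containsInduced.map {n m : ℕ} {P : Type*} [PartialOrder P]
    {𝒮 : Finset (Finset (Fin n))} {𝒜 : Finset (Finset (Fin m))} (h𝒮 : containsInduced 𝒮 P)
    (f : Fin n ↪ Fin m) (hf : ∀ S ∈ 𝒮, S.map f ∈ 𝒜) : containsInduced 𝒜 P := by
  obtain ⟨φ, hinj, hmem, hord⟩ := h𝒮
  refine ⟨fun x => (φ x).map f, (map_injective f).comp hinj, fun x => hf _ (hmem x), ?_⟩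
  intro x y
  rw [hord, map_subset_map]

theorem MulAction.card_smul_eq_mul_card_eq_card_group {G X : Type*} [Group G] [MulAction G X]
    [IsPretransitive G X] (x y : X) :
    Nat.card {g : G // g • x = y} * Nat.card X = Nat.card G := by
  obtain ⟨h, rfl⟩ := exists_smul_eq G x y
  have e : {g : G // g • x = h • x} ≃ stabilizer G x :=
    { toFun := fun g => ⟨h⁻¹ * g, by simp [mul_smul, g.2]⟩
      invFun := fun g => ⟨h * g, by simp [mul_smul, mem_stabilizer_iff.mp g.2]⟩
      left_inv := fun g => by simp
      right_inv := fun g => by simp }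
  rw [Nat.card_congr e, ← index_stabilizer_of_transitive G x, Subgroup.card_mul_index]

theorem Equiv.Perm.card_filter_smul_finset_mul_choose_eq_factorial {α : Type*} [Fintype α]
    [DecidableEq α] {S A : Finset α} (hSA : S.card = A.card) :
    #{σ : Equiv.Perm α | σ • S = A} * (Fintype.card α).choose A.card =
      (Fintype.card α).factorial := by
  have := Set.powersetCard.isPretransitive (α := α) (n := A.card)
  have hcard := card_smul_eq_mul_card_eq_card_group (G := Equiv.Perm α)
    (Set.powersetCard.ofCard hSA) (Set.powersetCard.ofCard rfl)
  rw [Set.powersetCard.card, Nat.card_perm] at hcard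
  simp only [Nat.card_eq_fintype_card] at hcard
  rw [← hcard, ← Fintype.card_subtype]
  congr 1
  exact Fintype.card_congr (Equiv.subtypeEquivRight fun σ => by
    simp [← Subtype.val_inj, Set.powersetCard.val_ofCard])

theorem Finset.sum_card_filter_smul_mem {G X : Type*} [SMul G X] [Fintype G] [DecidableEq X]
    (H 𝒜 : Finset X) :
    ∑ g : G, #{x ∈ H | g • x ∈ 𝒜} = ∑ y ∈ 𝒜, ∑ x ∈ H, #{g : G | g • x = y} := by
  simp only [card_filter]
  calc ∑ g : G, ∑ x ∈ H, (if g • x ∈ 𝒜 then 1 else 0)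
      = ∑ g : G, ∑ x ∈ H, ∑ y ∈ 𝒜, if g • x = y then 1 else 0 := by simp only [sum_ite_eq]
    _ = ∑ y ∈ 𝒜, ∑ x ∈ H, ∑ g : G, if g • x = y then 1 else 0 := by
        rw [sum_comm, sum_comm (s := 𝒜)]
        exact sum_congr rfl fun x _ => sum_comm

theorem Equiv.Perm.sum_card_filter_smul_finset_mul_choose {α : Type*} [Fintype α]
    [DecidableEq α] (H : Finset (Finset α)) (A : Finset α) :
    (∑ S ∈ H, #{σ : Equiv.Perm α | σ • S = A}) * (Fintype.card α).choose A.card =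
      #{S ∈ H | S.card = A.card} * (Fintype.card α).factorial := by
  rw [sum_mul, card_filter, sum_mul]
  refine sum_congr rfl fun S _ => ?_
  split_ifs with h
  · rw [one_mul, card_filter_smul_finset_mul_choose_eq_factorial h]
  · suffices #{σ : Equiv.Perm α | σ • S = A} = 0 by rw [this, zero_mul, zero_mul]
    rw [card_eq_zero, filter_eq_empty_iff]
    rintro σ - rfl
    exact h (card_smul_finset σ S).symm

theorem lubell_bound_induced_general (n a b : ℕ) (P : Type*) [PartialOrder P]
    (H : Finset (Finset (Fin n))) (N α : ℕ) (hN : 0 < N)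
    (hlevels : ∀ i : ℕ, a ≤ i → i ≤ b → (H.filter (fun S => S.card = i)).card = N)
    (hα : ∀ 𝒮 ⊆ H, ¬ containsInduced 𝒮 P → 𝒮.card ≤ α)
    (𝒜 : Finset (Finset (Fin n))) (h𝒜 : ¬ containsInduced 𝒜 P)
    (hrange : ∀ A ∈ 𝒜, a ≤ A.card ∧ A.card ≤ b) :
    ∑ A ∈ 𝒜, (1 : ℝ) / (n.choose A.card) ≤ (α : ℝ) / N := by
  have hfree (σ : Equiv.Perm (Fin n)) : #{S ∈ H | σ • S ∈ 𝒜} ≤ α :=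
    hα _ (filter_subset _ _) fun h => h𝒜 <| h.map σ.toEmbedding fun S hS => by
      simpa [smul_finset_def, map_eq_image] using (mem_filter.mp hS).2
  have hweight (A) (hA : A ∈ 𝒜) :
      ((∑ S ∈ H, #{σ : Equiv.Perm (Fin n) | σ • S = A} : ℕ) : ℝ) =
        N * n.factorial / n.choose A.card := by
    have h := Equiv.Perm.sum_card_filter_smul_finset_mul_choose H A
    rw [hlevels _ (hrange A hA).1 (hrange A hA).2, Fintype.card_fin] at h
    have hchoose : 0 < n.choose A.card := Nat.choose_pos (by simpa using card_le_univ A)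
    rw [eq_div_iff (by positivity)]
    exact_mod_cast h
  have hcount : ∑ A ∈ 𝒜, (N : ℝ) * n.factorial / n.choose A.card ≤ n.factorial * α := by
    rw [← sum_congr rfl hweight]
    exact_mod_cast calc ∑ A ∈ 𝒜, ∑ S ∈ H, #{σ : Equiv.Perm (Fin n) | σ • S = A}
        = ∑ σ : Equiv.Perm (Fin n), #{S ∈ H | σ • S ∈ 𝒜} :=
          (sum_card_filter_smul_mem H 𝒜).symm
      _ ≤ ∑ _σ : Equiv.Perm (Fin n), α := sum_le_sum fun σ _ => hfree σ
      _ = n.factorial * α := by simp [Fintype.card_perm]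
  have hN' : (0 : ℝ) < N := by exact_mod_cast hN
  calc ∑ A ∈ 𝒜, (1 : ℝ) / n.choose A.card
      = (∑ A ∈ 𝒜, (N : ℝ) * n.factorial / n.choose A.card) / (N * n.factorial) := by
        rw [sum_div]
        exact sum_congr rfl fun A _ => by field_simp
    _ ≤ n.factorial * α / (N * n.factorial) := by gcongr
    _ = α / N := by field_simp

/-- If `H ⊆ 2^[n]` has exactly `N` sets of each cardinality `i` with `a ≤ i ≤ b`,
`𝒜` has no induced copy of `P`, every set of `𝒜` has cardinality between `a` and `b`,
and `α` bounds the size of every induced-`P`-free subfamily of `H` (in particular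
`α = α^#(H,P)`), then the Lubell function satisfies `Σ_{A∈𝒜} 1/C(n,|A|) ≤ α/N`. -/
theorem lubell_bound_induced (n a b : ℕ) (P : Type*) [PartialOrder P] [Fintype P]
    (H : Finset (Finset (Fin n))) (N α : ℕ) (hN : 0 < N)
    (hlevels : ∀ i : ℕ, a ≤ i → i ≤ b → (H.filter (fun S => S.card = i)).card = N)
    (hα : ∀ 𝒮 ⊆ H, ¬ containsInduced 𝒮 P → 𝒮.card ≤ α)
    (𝒜 : Finset (Finset (Fin n))) (h𝒜 : ¬ containsInduced 𝒜 P)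
    (hrange : ∀ A ∈ 𝒜, a ≤ A.card ∧ A.card ≤ b) :
    ∑ A ∈ 𝒜, (1 : ℝ) / (n.choose A.card) ≤ (α : ℝ) / N :=
  lubell_bound_induced_general n a b P H N α hN hlevels hα 𝒜 h𝒜 hrange
end

section
/- Assume that for every finite poset P there exists a constant C(P) such that every family of subsets of [k] with no induced copy of P has size at most C(P)·C(k,⌊k/2⌋) (the Methuku–Pálvölgyi theorem). Then for every finite poset P and every c > 1/2: for all n and all 0 ≤ a ≤ b ≤ n, if A ⊆ 2^[n] has no induced copy of P and every set in A has cardinality between a and b, then l_n(A) = O((b−a)^c), with the implicit constant depending only on P and c. -/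
open Finset

noncomputable def lubell {n : ℕ} (𝒜 : Finset (Finset (Fin n))) : ℝ :=
  ∑ A ∈ 𝒜, (1 : ℝ) / n.choose #A

/-- The conclusion of the Methuku–Pálvölgyi theorem for `P`, with constant `C`. -/
def InducedFreeBound (P : Type*) [PartialOrder P] (C : ℝ) : Prop :=
  ∀ k : ℕ, ∀ ℬ : Finset (Finset (Fin k)),
    ¬ containsInduced ℬ P → (#ℬ : ℝ) ≤ C * k.choose (k / 2)

section Families

variable {P : Type*} [PartialOrder P] {n : ℕ}

theorem containsInduced.mono {ℬ 𝒜 : Finset (Finset (Fin n))} (hℬ : containsInduced ℬ P)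
    (h : ℬ ⊆ 𝒜) : containsInduced 𝒜 P := by
  obtain ⟨φ, hinj, hmem, hle⟩ := hℬ
  exact ⟨φ, hinj, fun x => h (hmem x), hle⟩

theorem containsInduced_of_isEmpty [IsEmpty P] (𝒜 : Finset (Finset (Fin n))) :
    containsInduced 𝒜 P :=
  ⟨isEmptyElim, fun x => isEmptyElim x, isEmptyElim, isEmptyElim⟩

theorem containsInduced.of_image {m : ℕ} {𝒜 : Finset (Finset (Fin n))}
    {f : Finset (Fin n) → Finset (Fin m)} (hf : ∀ A ∈ 𝒜, ∀ A' ∈ 𝒜, f A ⊆ f A' ↔ A ⊆ A')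
    (h : containsInduced (𝒜.image f) P) : containsInduced 𝒜 P := by
  obtain ⟨φ, hinj, hmem, hle⟩ := h
  choose ψ hψ hfψ using fun x => mem_image.mp (hmem x)
  refine ⟨ψ, fun x y hxy => hinj ?_, hψ, fun x y => ?_⟩
  · rw [← hfψ x, ← hfψ y, hxy]
  · rw [hle, ← hfψ x, ← hfψ y, hf _ (hψ x) _ (hψ y)]

end Families

-- Both sides count the chains `S ⊆ A ⊆ T ⊆ [n]` with `|S| = p`, `|A| = i` and `|T| = p + m`.
theorem Nat.choose_mul_choose_mul_choose {n p i m : ℕ} (hpi : p ≤ i) (him : i ≤ p + m) :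
    n.choose i * i.choose p * (n - i).choose (p + m - i)
      = n.choose (p + m) * (p + m).choose p * m.choose (i - p) := by
  have h₁ := Nat.choose_mul (n := n) hpi
  have h₂ := Nat.choose_mul (n := n) (Nat.le_add_right p m)
  have h₃ := Nat.choose_mul (n := n - p) (k := m) (s := i - p) (by omega)
  rw [show n - p - (i - p) = n - i by omega, show m - (i - p) = p + m - i by omega] at h₃
  rw [h₁, h₂, Nat.add_sub_cancel_left, mul_assoc, mul_assoc, h₃]

theorem Finset.filter_powersetCard_subset_of_subset {α : Type*} [DecidableEq α] {A T : Finset α}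
    (p : ℕ) (hAT : A ⊆ T) :
    {S ∈ powersetCard p T | S ⊆ A} = powersetCard p A := by
  ext S
  simp only [mem_filter, mem_powersetCard]
  exact ⟨fun h => ⟨h.2, h.1.2⟩, fun h => ⟨⟨h.1.trans hAT, h.2⟩, h.1⟩⟩

theorem Finset.sum_le_sum_sum_filter_of_forall_exists {ι α M : Type*} [AddCommMonoid M]
    [PartialOrder M] [IsOrderedAddMonoid M] {s : Finset α} {I : Finset ι} {p : ι → α → Prop}
    [∀ i, DecidablePred (p i)] {f : α → M} (hf : ∀ a ∈ s, 0 ≤ f a)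
    (hcover : ∀ a ∈ s, ∃ i ∈ I, p i a) :
    ∑ a ∈ s, f a ≤ ∑ i ∈ I, ∑ a ∈ s with p i a, f a := by
  simp only [sum_filter]
  rw [sum_comm]
  refine sum_le_sum fun a ha => ?_
  obtain ⟨i, hi, hpi⟩ := hcover a ha
  calc f a = if p i a then f a else 0 := (if_pos hpi).symm
    _ ≤ ∑ j ∈ I, if p j a then f a else 0 :=
      single_le_sum (f := fun j => if p j a then f a else 0)
        (fun j _ => by split_ifs <;> simp [hf a ha]) hi

theorem sum_sum_card_filter_subset_subset {α : Type*} [Fintype α] [DecidableEq α] {p q : ℕ}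
    (𝒜 : Finset (Finset α)) (h𝒜 : ∀ A ∈ 𝒜, #A ≤ q) :
    ∑ T ∈ powersetCard q univ, ∑ S ∈ powersetCard p T, #{A ∈ 𝒜 | S ⊆ A ∧ A ⊆ T}
      = ∑ A ∈ 𝒜, (#A).choose p * (Fintype.card α - #A).choose (q - #A) := by
  simp only [card_filter]
  rw [sum_congr rfl fun T _ => sum_comm, sum_comm]
  refine sum_congr rfl fun A hA => ?_
  have hS : ∀ T, ∑ S ∈ powersetCard p T, (if S ⊆ A ∧ A ⊆ T then 1 else 0)
      = if A ⊆ T then (#A).choose p else 0 := by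
    intro T
    split_ifs with hAT
    · simp only [hAT, and_true, sum_boole, Nat.cast_id]
      rw [filter_powersetCard_subset_of_subset p hAT, card_powersetCard]
    · simp [hAT]
  rw [sum_congr rfl fun T _ => hS T, ← sum_filter, sum_const, smul_eq_mul, mul_comm,
    card_filter_powersetCard_subset _ _ _ (subset_univ A) (h𝒜 A hA), card_univ]

theorem Nat.choose_mul_pow_le_choose_sub_mul_pow {w r t : ℕ} (htr : t ≤ r) (hrw : r ≤ w) :
    (2 * w).choose w * (w - r + 1) ^ t ≤ (2 * w).choose (w - t) * (w + r) ^ t := by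
  induction t with
  | zero => simp
  | succ t ih =>
    have hstep : (2 * w).choose (w - t) * (w - t)
        = (2 * w).choose (w - (t + 1)) * (w + t + 1) := by
      have := Nat.choose_succ_right_eq (2 * w) (w - (t + 1))
      rwa [show w - (t + 1) + 1 = w - t by omega,
        show 2 * w - (w - (t + 1)) = w + t + 1 by omega] at this
    calc (2 * w).choose w * (w - r + 1) ^ (t + 1)
        = (2 * w).choose w * (w - r + 1) ^ t * (w - r + 1) := by ring
      _ ≤ (2 * w).choose (w - t) * (w + r) ^ t * (w - t) :=
        Nat.mul_le_mul (ih (by omega)) (by omega)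
      _ = (2 * w).choose (w - (t + 1)) * (w + r) ^ t * (w + t + 1) := by
        rw [mul_right_comm, hstep, mul_right_comm]
      _ ≤ (2 * w).choose (w - (t + 1)) * (w + r) ^ t * (w + r) :=
        Nat.mul_le_mul_left _ (by omega)
      _ = (2 * w).choose (w - (t + 1)) * (w + r) ^ (t + 1) := by ring

theorem choose_middle_le_exp_mul_choose_sub {w r t : ℕ} (htr : t ≤ r) (hrw : r ≤ w) :
    ((2 * w).choose w : ℝ)
      ≤ Real.exp (2 * r ^ 2 / (w - r + 1)) * (2 * w).choose (w - t) := by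
  set D : ℝ := w - r + 1
  have hD : 0 < D := by
    have : (r : ℝ) ≤ w := by exact_mod_cast hrw
    simp only [D]; linarith
  have hnat : ((2 * w).choose w : ℝ) * D ^ t ≤ (2 * w).choose (w - t) * ((w : ℝ) + r) ^ t := by
    have := Nat.choose_mul_pow_le_choose_sub_mul_pow htr hrw
    simp only [D]
    rw [← Nat.cast_sub hrw]
    exact_mod_cast this
  have hwr : (w : ℝ) + r ≤ D * Real.exp (2 * r / D) := by
    have := Real.add_one_le_exp (2 * r / D)
    have : D * (2 * r / D + 1) = w + r + 1 := by field_simp; simp only [D]; ring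
    nlinarith
  have hpow : ((w : ℝ) + r) ^ t ≤ D ^ t * Real.exp (2 * r ^ 2 / D) := by
    have ht : (t : ℝ) ≤ r := by exact_mod_cast htr
    calc ((w : ℝ) + r) ^ t ≤ (D * Real.exp (2 * r / D)) ^ t := by gcongr
      _ = D ^ t * Real.exp (t * (2 * r / D)) := by rw [mul_pow, ← Real.exp_nat_mul]
      _ ≤ D ^ t * Real.exp (2 * r ^ 2 / D) := by
        gcongr
        rw [mul_div_assoc']
        exact div_le_div_of_nonneg_right (by nlinarith) hD.le
  refine le_of_mul_le_mul_right ?_ (pow_pos hD t)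
  calc ((2 * w).choose w : ℝ) * D ^ t ≤ (2 * w).choose (w - t) * ((w : ℝ) + r) ^ t := hnat
    _ ≤ (2 * w).choose (w - t) * (D ^ t * Real.exp (2 * r ^ 2 / D)) := by gcongr
    _ = Real.exp (2 * r ^ 2 / D) * (2 * w).choose (w - t) * D ^ t := by ring

theorem choose_middle_le_exp_mul_choose {w r j : ℕ} (hrw : r ≤ w) (hj : j ≤ w + r)
    (hj' : w ≤ j + r) :
    ((2 * w).choose w : ℝ) ≤ Real.exp (2 * r ^ 2 / (w - r + 1)) * (2 * w).choose j := by
  rcases le_total j w with hjw | hwj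
  · have := choose_middle_le_exp_mul_choose_sub (t := w - j) (by omega) hrw
    rwa [Nat.sub_sub_self hjw] at this
  · have := choose_middle_le_exp_mul_choose_sub (t := j - w) (by omega) hrw
    rwa [show w - (j - w) = 2 * w - j by omega, Nat.choose_symm (by omega)] at this

/-- The layers `h - r, …, h + r` are thin relative to the widest window `[h - w, h + w] ⊆ [0, n]`
centred at `h`: their binomial coefficients in that window are within a factor `exp 10` of
the central one. -/
def IsThinBand (n h r : ℕ) : Prop :=
  h ≤ n ∧ r ≤ min h (n - h) ∧ r * r ≤ 5 * (min h (n - h) - r + 1)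

namespace InducedFreeBound

variable {P : Type*} [PartialOrder P] {n : ℕ} {C : ℝ} {𝒜 : Finset (Finset (Fin n))}

theorem nonneg (hC : InducedFreeBound P C) (hfree : ¬ containsInduced 𝒜 P) : 0 ≤ C := by
  have : Nonempty P := by
    by_contra hP
    have := not_nonempty_iff.mp hP
    exact hfree (containsInduced_of_isEmpty 𝒜)
  simpa using hC 0 ∅ fun ⟨_, _, hmem, _⟩ => notMem_empty _ (hmem (Classical.arbitrary P))

theorem card_filter_subset_subset_le (hC : InducedFreeBound P C)
    (hfree : ¬ containsInduced 𝒜 P) {S T : Finset (Fin n)} (hST : S ⊆ T) :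
    (#{A ∈ 𝒜 | S ⊆ A ∧ A ⊆ T} : ℝ) ≤ C * (#T - #S).choose ((#T - #S) / 2) := by
  set ℱ := {A ∈ 𝒜 | S ⊆ A ∧ A ⊆ T}
  set e := (T \ S).orderEmbOfFin rfl
  set Φ : Finset (Fin n) → Finset (Fin #(T \ S)) := fun A => {j | e j ∈ A}
  have hΦ : ∀ A ∈ ℱ, ∀ A' ∈ ℱ, Φ A ⊆ Φ A' ↔ A ⊆ A' := by
    simp only [ℱ, mem_filter]
    refine fun A hA A' hA' => ⟨fun h x hx => ?_, fun h j => by simpa [Φ] using @h (e j)⟩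
    by_cases hxS : x ∈ S
    · exact hA'.2.1 hxS
    · obtain ⟨j, rfl⟩ : x ∈ Set.range e := by
        rw [range_orderEmbOfFin]; exact mem_sdiff.mpr ⟨hA.2.2 hx, hxS⟩
      simpa [Φ] using @h j (by simpa [Φ] using hx)
  have hinj : Set.InjOn Φ ℱ := fun A hA A' hA' h =>
    ((hΦ A hA A' hA').1 h.le).antisymm ((hΦ A' hA' A hA).1 h.ge)
  rw [← card_image_of_injOn hinj, ← card_sdiff_of_subset hST]
  exact hC _ _ fun h => hfree ((containsInduced.of_image hΦ h).mono (filter_subset _ _))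

theorem sum_choose_div_choose_le (hC : InducedFreeBound P C) (hfree : ¬ containsInduced 𝒜 P)
    {p m : ℕ} (hn : p + m ≤ n) (h𝒜 : ∀ A ∈ 𝒜, p ≤ #A ∧ #A ≤ p + m) :
    ∑ A ∈ 𝒜, (m.choose (#A - p) : ℝ) / n.choose #A ≤ C * m.choose (m / 2) := by
  set N : ℝ := n.choose (p + m) * (p + m).choose p
  have hN : 0 < N := by
    have := Nat.choose_pos hn
    have := Nat.choose_pos (Nat.le_add_right p m)
    positivity
  have hterm : ∀ A ∈ 𝒜, (m.choose (#A - p) : ℝ) / n.choose #A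
      = (((#A).choose p * (n - #A).choose (p + m - #A) : ℕ) : ℝ) / N := by
    intro A hA
    have := Nat.choose_pos ((h𝒜 A hA).2.trans hn)
    rw [div_eq_div_iff (by positivity) hN.ne']
    have hchain := Nat.choose_mul_choose_mul_choose (n := n) (h𝒜 A hA).1 (h𝒜 A hA).2
    simp only [N]
    norm_cast
    linarith
  calc ∑ A ∈ 𝒜, (m.choose (#A - p) : ℝ) / n.choose #A
      = (∑ A ∈ 𝒜, (((#A).choose p * (n - #A).choose (p + m - #A) : ℕ) : ℝ)) / N := by
        rw [sum_div]; exact sum_congr rfl hterm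
    _ = (∑ T ∈ powersetCard (p + m) univ, ∑ S ∈ powersetCard p T,
          (#{A ∈ 𝒜 | S ⊆ A ∧ A ⊆ T} : ℝ)) / N := by
        have := sum_sum_card_filter_subset_subset (p := p) 𝒜 fun A hA => (h𝒜 A hA).2
        rw [Fintype.card_fin] at this
        exact_mod_cast congrArg (fun x : ℕ => (x : ℝ) / N) this.symm
    _ ≤ (∑ T ∈ powersetCard (p + m) univ, ∑ S ∈ powersetCard p T,
          C * m.choose (m / 2)) / N := by
        gcongr with T hT S hS
        rw [mem_powersetCard] at hT hS
        have := hC.card_filter_subset_subset_le hfree hS.1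
        rwa [hT.2, hS.2, Nat.add_sub_cancel_left] at this
    _ = C * m.choose (m / 2) := by
        rw [sum_congr rfl fun T hT => by
          rw [sum_const, card_powersetCard, (mem_powersetCard.mp hT).2]]
        simp only [sum_const, card_powersetCard, card_univ, Fintype.card_fin, nsmul_eq_mul]
        rw [div_eq_iff hN.ne']
        ring

theorem lubell_filter_le (hC : InducedFreeBound P C) (hfree : ¬ containsInduced 𝒜 P)
    {h r : ℕ} (hband : IsThinBand n h r) :
    lubell {A ∈ 𝒜 | #A ≤ h + r ∧ h ≤ #A + r} ≤ Real.exp 10 * C := by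
  obtain ⟨hhn, hrw, hr⟩ := hband
  set w := min h (n - h)
  have hwh : w ≤ h := min_le_left _ _
  have hwn : w ≤ n - h := min_le_right _ _
  set ℬ := {A ∈ 𝒜 | #A ≤ h + r ∧ h ≤ #A + r}
  have hℬ : ∀ A ∈ ℬ, h - w ≤ #A ∧ #A ≤ h - w + 2 * w := by
    intro A hA
    have := (mem_filter.mp hA).2
    omega
  have hsum := hC.sum_choose_div_choose_le (fun hℬP => hfree (hℬP.mono (filter_subset _ _)))
    (show h - w + 2 * w ≤ n by omega) hℬ
  rw [Nat.mul_div_cancel_left w two_pos] at hsum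
  have hexp : 2 * (r : ℝ) ^ 2 / (w - r + 1) ≤ 10 := by
    have hrw' : (r : ℝ) ≤ w := by exact_mod_cast hrw
    have hr' : ((r * r : ℕ) : ℝ) ≤ ((5 * (w - r + 1) : ℕ) : ℝ) := by exact_mod_cast hr
    push_cast [Nat.cast_sub hrw] at hr'
    rw [div_le_iff₀ (by linarith)]
    nlinarith
  have hmid : ∀ A ∈ ℬ,
      ((2 * w).choose w : ℝ) ≤ Real.exp 10 * (2 * w).choose (#A - (h - w)) := by
    intro A hA
    have := (mem_filter.mp hA).2
    exact (choose_middle_le_exp_mul_choose (j := #A - (h - w)) hrw (by omega) (by omega)).trans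
      (by gcongr)
  have hpos : (0 : ℝ) < (2 * w).choose w := by exact_mod_cast Nat.choose_pos (by omega)
  refine le_of_mul_le_mul_left ?_ hpos
  calc ((2 * w).choose w : ℝ) * lubell ℬ
        = ∑ A ∈ ℬ, ((2 * w).choose w : ℝ) / n.choose #A := by
        rw [lubell, mul_sum]; simp only [mul_one_div]
    _ ≤ ∑ A ∈ ℬ, Real.exp 10 * (((2 * w).choose (#A - (h - w)) : ℝ) / n.choose #A) := by
        gcongr with A hA
        rw [← mul_div_assoc]
        gcongr
        exact hmid A hA
    _ ≤ Real.exp 10 * (C * (2 * w).choose w) := by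
        rw [← mul_sum]
        gcongr
    _ = (2 * w).choose w * (Real.exp 10 * C) := by ring

theorem lubell_le_card_mul (hC : InducedFreeBound P C) (hfree : ¬ containsInduced 𝒜 P)
    (bands : Finset (ℕ × ℕ)) (hcover : ∀ A ∈ 𝒜, ∃ β ∈ bands,
      IsThinBand n β.1 β.2 ∧ #A ≤ β.1 + β.2 ∧ β.1 ≤ #A + β.2) :
    lubell 𝒜 ≤ #bands * (Real.exp 10 * C) := by
  classical
  calc lubell 𝒜 ≤ ∑ β ∈ bands with IsThinBand n β.1 β.2,
        lubell {A ∈ 𝒜 | #A ≤ β.1 + β.2 ∧ β.1 ≤ #A + β.2} := by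
        refine sum_le_sum_sum_filter_of_forall_exists (fun A _ => by positivity) fun A hA => ?_
        obtain ⟨β, hβ, hthin, hnear⟩ := hcover A hA
        exact ⟨β, mem_filter.mpr ⟨hβ, hthin⟩, hnear⟩
    _ ≤ #{β ∈ bands | IsThinBand n β.1 β.2} * (Real.exp 10 * C) := by
        rw [← nsmul_eq_mul]
        exact sum_le_card_nsmul _ _ _ fun β hβ => hC.lubell_filter_le hfree (mem_filter.mp hβ).2
    _ ≤ #bands * (Real.exp 10 * C) := by
        have := hC.nonneg hfree
        gcongr
        exact filter_subset _ _

end InducedFreeBound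

def intervalBands (n a b : ℕ) : Finset (ℕ × ℕ) :=
  (range (Nat.sqrt (b - a) + 1)).image (fun k => (a + k * k + k, k)) ∪
    (range (Nat.sqrt (b - a) + 1)).image (fun k => (b - k * k - k, k)) ∪
    {(n / 2, Nat.sqrt (b - a) + 1)}

theorem card_intervalBands_le (n a b : ℕ) : #(intervalBands n a b) ≤ 2 * Nat.sqrt (b - a) + 3 :=
  calc #(intervalBands n a b)
      ≤ (Nat.sqrt (b - a) + 1) + (Nat.sqrt (b - a) + 1) + 1 := by
        refine (card_union_le _ _).trans (add_le_add ((card_union_le _ _).trans ?_)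
          (card_singleton _).le)
        exact add_le_add (card_image_le.trans (card_range _).le)
          (card_image_le.trans (card_range _).le)
    _ = 2 * Nat.sqrt (b - a) + 3 := by ring

theorem exists_mem_intervalBands {n a b i : ℕ} (hbn : b ≤ n) (hn : 100 ≤ n) (hai : a ≤ i)
    (hib : i ≤ b) : ∃ β ∈ intervalBands n a b,
      IsThinBand n β.1 β.2 ∧ i ≤ β.1 + β.2 ∧ β.1 ≤ i + β.2 := by
  set s := Nat.sqrt (b - a)
  have hsqrt : ∀ x ≤ b - a, ∃ k ≤ s, k * k ≤ x ∧ x < k * k + 2 * k + 1 := fun x hx =>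
    ⟨Nat.sqrt x, Nat.sqrt_le_sqrt hx, Nat.sqrt_le x,
      (Nat.lt_succ_sqrt x).trans_eq (by rw [Nat.succ_eq_add_one]; ring)⟩
  obtain ⟨k, hks, hk, hk₁⟩ := hsqrt (i - a) (by omega)
  obtain ⟨k', hks', hk', hk₁'⟩ := hsqrt (b - i) (by omega)
  by_cases hlow : 2 * (a + k * k + k) ≤ n
  · refine ⟨(a + k * k + k, k), ?_, by dsimp only [IsThinBand]; omega⟩
    exact mem_union_left _ (mem_union_left _ (mem_image_of_mem _ (mem_range.mpr (by omega))))
  by_cases hup : n ≤ 2 * (b - k' * k' - k')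
  · refine ⟨(b - k' * k' - k', k'), ?_, by dsimp only [IsThinBand]; omega⟩
    exact mem_union_left _ (mem_union_right _ (mem_image_of_mem _ (mem_range.mpr (by omega))))
  have hs : s * s ≤ b - a := Nat.sqrt_le _
  have hsn : 10 * s ≤ n := by
    rcases le_total s 10 with hs10 | hs10
    · omega
    · have := Nat.mul_le_mul_right s hs10
      omega
  refine ⟨(n / 2, s + 1), mem_union_right _ (mem_singleton_self _), ?_⟩
  dsimp only [IsThinBand]
  rw [show (s + 1) * (s + 1) = s * s + 2 * s + 1 by ring]
  omega

theorem lubell_le_add_one {n : ℕ} (𝒜 : Finset (Finset (Fin n))) : lubell 𝒜 ≤ n + 1 := by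
  calc lubell 𝒜 ≤ lubell (univ : Finset (Finset (Fin n))) :=
        sum_le_sum_of_subset_of_nonneg (subset_univ 𝒜) fun _ _ _ => by positivity
    _ = ∑ m ∈ range (n + 1), n.choose m • ((1 : ℝ) / n.choose m) := by
        rw [lubell, ← powerset_univ]
        convert sum_powerset_apply_card (fun m => (1 : ℝ) / n.choose m) using 3 <;> simp
    _ = n + 1 := by
        rw [sum_congr rfl fun m hm => ?_, sum_const, card_range, nsmul_one, Nat.cast_succ]
        have := Nat.choose_pos (Nat.lt_succ_iff.mp (mem_range.mp hm))
        rw [nsmul_eq_mul, mul_one_div_cancel (by positivity)]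

theorem two_mul_sqrt_add_three_le_rpow (d : ℕ) {c : ℝ} (hc : 1 / 2 ≤ c) :
    (2 * Nat.sqrt d + 3 : ℝ) ≤ 5 * ((d : ℝ) + 1) ^ c := by
  have hd : (1 : ℝ) ≤ d + 1 := by simp
  have hs : (Nat.sqrt d : ℝ) ≤ √((d : ℝ) + 1) :=
    Real.nat_sqrt_le_real_sqrt.trans (Real.sqrt_le_sqrt (by linarith))
  have h1 : 1 ≤ √((d : ℝ) + 1) := Real.one_le_sqrt.mpr hd
  calc (2 * Nat.sqrt d + 3 : ℝ) ≤ 5 * √((d : ℝ) + 1) := by linarith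
    _ ≤ 5 * ((d : ℝ) + 1) ^ c := by
        rw [Real.sqrt_eq_rpow]
        gcongr

theorem lubell_induced_interval_bound_general (P : Type*) [PartialOrder P]
    (hMP : ∃ C : ℝ, ∀ k : ℕ, ∀ ℬ : Finset (Finset (Fin k)),
      ¬ containsInduced ℬ P → (ℬ.card : ℝ) ≤ C * (k.choose (k / 2))) :
    ∀ c : ℝ, 1 / 2 < c → ∃ K : ℝ, ∀ n a b : ℕ, a ≤ b → b ≤ n →
      ∀ 𝒜 : Finset (Finset (Fin n)), ¬ containsInduced 𝒜 P →
        (∀ A ∈ 𝒜, a ≤ A.card ∧ A.card ≤ b) →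
        ∑ A ∈ 𝒜, (1 : ℝ) / (n.choose A.card) ≤ K * (((b - a : ℕ) : ℝ) + 1) ^ c := by
  intro c hc
  obtain ⟨C, hC : InducedFreeBound P C⟩ := hMP
  set B := Real.exp 10 * C
  refine ⟨5 * B + 100, fun n a b hab hbn 𝒜 hfree h𝒜 => ?_⟩
  change lubell 𝒜 ≤ _
  have hB : 0 ≤ B := mul_nonneg (Real.exp_pos 10).le (hC.nonneg hfree)
  have hX : 1 ≤ (((b - a : ℕ) : ℝ) + 1) ^ c := Real.one_le_rpow (by simp) (by linarith)
  rcases lt_or_ge n 100 with hn | hn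
  · have : (n : ℝ) + 1 ≤ 100 := by exact_mod_cast hn
    nlinarith [lubell_le_add_one 𝒜]
  calc lubell 𝒜 ≤ #(intervalBands n a b) * B := hC.lubell_le_card_mul hfree _
        fun A hA => exists_mem_intervalBands hbn hn (h𝒜 A hA).1 (h𝒜 A hA).2
    _ ≤ (2 * Nat.sqrt (b - a) + 3 : ℝ) * B := by
        gcongr; exact_mod_cast card_intervalBands_le n a b
    _ ≤ 5 * (((b - a : ℕ) : ℝ) + 1) ^ c * B := by
        gcongr; exact two_mul_sqrt_add_three_le_rpow _ hc.le
    _ ≤ (5 * B + 100) * (((b - a : ℕ) : ℝ) + 1) ^ c := by nlinarith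

/-- Assuming the Methuku–Pálvölgyi theorem (every induced-`P`-free family in `2^[k]` has
size at most `C(P)·C(k,⌊k/2⌋)`), for every `c > 1/2` there is a constant `K` such that
every induced-`P`-free family `𝒜 ⊆ 2^[n]` whose members have cardinality between `a`
and `b` has Lubell function `l_n(𝒜) = Σ_{A∈𝒜} 1/C(n,|A|) ≤ K·(b-a)^c` (with `b-a`
interpreted as `b-a+1` so that the big-O bound covers the degenerate case `a = b`). -/
theorem lubell_induced_interval_bound (P : Type*) [PartialOrder P] [Fintype P]
    (hMP : ∃ C : ℝ, ∀ k : ℕ, ∀ ℬ : Finset (Finset (Fin k)),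
      ¬ containsInduced ℬ P → (ℬ.card : ℝ) ≤ C * (k.choose (k / 2))) :
    ∀ c : ℝ, 1 / 2 < c → ∃ K : ℝ, ∀ n a b : ℕ, a ≤ b → b ≤ n →
      ∀ 𝒜 : Finset (Finset (Fin n)), ¬ containsInduced 𝒜 P →
        (∀ A ∈ 𝒜, a ≤ A.card ∧ A.card ≤ b) →
        ∑ A ∈ 𝒜, (1 : ℝ) / (n.choose A.card) ≤ K * (((b - a : ℕ) : ℝ) + 1) ^ c :=
  lubell_induced_interval_bound_general P hMP
end
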